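/- arXiv:1410.3540 — 7 statements merged into one kernel-verified Lean document; each statement's English description precedes it below -/
import Mathlib

section
/- Let F be a finite field with q elements and for each d ≥ 1 let N(d) denote the number of monic irreducible polynomials of degree d over F. Then for every n ≥ 1, the coefficient of X^n in the formal power series ∏_{d=1}^{n} ((1 − X^d)⁻¹)^{N(d)} (equivalently, in ∏_{d≥1} (1 − X^d)^{−N(d)}, since only factors with d ≤ n contribute) is equal to q^n; equivalently, this product agrees with the power series (1 − qX)⁻¹ in all coefficients. -/
/-!
After grouping the factors by the monic irreducible polynomials `π` of degree at most `n`, the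
product becomes `∏ π, (1 - X ^ deg π)⁻¹ = ∏ π, ∑ k, X ^ (k * deg π)`, so its `X ^ n` coefficient
counts the exponent vectors `k` with `∑ π, k π * deg π = n`. By unique factorization in `F[X]`,
`k ↦ ∏ π, π ^ k π` is a bijection from these vectors onto the monic polynomials of degree `n`,
and there are `q ^ n` of those, one for each choice of the lower coefficients.
-/

open Polynomial PowerSeries UniqueFactorizationMonoid Finset

theorem Finset.prod_pow_card_fiberwise {ι κ M : Type*} [CommMonoid M] [DecidableEq κ]
    {s : Finset ι} {t : Finset κ} {g : ι → κ} (h : ∀ i ∈ s, g i ∈ t) (f : κ → M) :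
    ∏ j ∈ t, f j ^ #{i ∈ s | g i = j} = ∏ i ∈ s, f (g i) := by
  rw [← prod_fiberwise_of_maps_to h]
  refine prod_congr rfl fun j _ => ?_
  rw [prod_congr rfl fun i hi => congrArg f (mem_filter.1 hi).2, prod_const]

namespace PowerSeries

variable {k : Type*} [Field k]

theorem inv_one_sub_X_pow {d : ℕ} (hd : 0 < d) :
    (1 - X ^ d : k⟦X⟧)⁻¹ = mk fun m => if d ∣ m then 1 else 0 := by
  rw [PowerSeries.inv_eq_iff_mul_eq_one (by simp [hd.ne'])]
  ext m
  simp only [mul_sub, mul_one, map_sub, coeff_mul_X_pow', coeff_mk, coeff_one]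
  rcases Nat.eq_zero_or_pos m with rfl | hm
  · simp [hd.ne']
  · have hshift : (d ≤ m ∧ d ∣ m - d) ↔ d ∣ m :=
      ⟨fun ⟨hle, hdvd⟩ => by simpa [Nat.sub_add_cancel hle] using Nat.dvd_add hdvd (dvd_refl d),
        fun hdvd => ⟨Nat.le_of_dvd hm hdvd, Nat.dvd_sub hdvd dvd_rfl⟩⟩
    simp only [← ite_and, hshift, sub_self, hm.ne', if_false]

theorem coeff_inv_one_sub_X_pow {d : ℕ} (hd : 0 < d) (m : ℕ) :
    coeff m (1 - X ^ d : k⟦X⟧)⁻¹ = if d ∣ m then 1 else 0 := by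
  rw [inv_one_sub_X_pow hd, coeff_mk]

theorem coeff_prod_inv_one_sub_X_pow {ι : Type*} [DecidableEq ι] {s : Finset ι} {deg : ι → ℕ}
    (hdeg : ∀ i ∈ s, 0 < deg i) (n : ℕ) :
    coeff n (∏ i ∈ s, (1 - X ^ deg i : k⟦X⟧)⁻¹) =
      #{l ∈ s.finsuppAntidiag n | ∀ i ∈ s, deg i ∣ l i} := by
  rw [coeff_prod, ← sum_boole]
  refine sum_congr rfl fun l _ => ?_
  rw [← prod_boole]
  exact prod_congr rfl fun i hi => coeff_inv_one_sub_X_pow (hdeg i hi) (l i)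

end PowerSeries

namespace Polynomial

section Semiring

variable {R : Type*} [Semiring R]

theorem finite_setOf_natDegree_le [Finite R] (n : ℕ) : {p : R[X] | p.natDegree ≤ n}.Finite := by
  have : Finite (degreeLT R (n + 1)) := .of_equiv _ (degreeLTEquiv R (n + 1)).toEquiv.symm
  refine (Set.finite_coe_iff.mp this).subset fun p hp => mem_degreeLT.2 ?_
  exact (degree_le_natDegree).trans_lt (by exact_mod_cast Nat.lt_succ_of_le hp)

theorem natCard_monic_natDegree_eq [Nontrivial R] (n : ℕ) :
    Nat.card {p : R[X] // p.Monic ∧ p.natDegree = n} = Nat.card R ^ n := by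
  rw [Nat.card_congr ((monicEquivDegreeLT n).trans (degreeLTEquiv R n).toEquiv), Nat.card_fun,
    Nat.card_fin]

end Semiring

theorem natDegree_prod_pow_of_monic {R : Type*} [CommSemiring R] {s : Finset R[X]}
    (hs : ∀ π ∈ s, π.Monic) (e : R[X] → ℕ) :
    (∏ π ∈ s, π ^ e π).natDegree = ∑ π ∈ s, e π * π.natDegree := by
  rw [natDegree_prod_of_monic _ _ fun π hπ => (hs π hπ).pow _]
  exact sum_congr rfl fun π hπ => (hs π hπ).natDegree_pow _

variable {F : Type*} [Field F]

variable (F) in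
noncomputable def monicIrreducibleUpTo [Finite F] (n : ℕ) : Finset F[X] :=
  ((finite_setOf_natDegree_le n).subset fun _ h => h.1 :
    {p : F[X] | p.natDegree ≤ n ∧ p.Monic ∧ Irreducible p}.Finite).toFinset

theorem mem_monicIrreducibleUpTo [Finite F] {n : ℕ} {p : F[X]} :
    p ∈ monicIrreducibleUpTo F n ↔ p.natDegree ≤ n ∧ p.Monic ∧ Irreducible p :=
  Set.Finite.mem_toFinset _

theorem card_filter_natDegree_eq_monicIrreducibleUpTo [Finite F] {n d : ℕ} (hd : d ≤ n) :
    #{π ∈ monicIrreducibleUpTo F n | π.natDegree = d} =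
      Nat.card {p : F[X] // p.Monic ∧ Irreducible p ∧ p.natDegree = d} := by
  rw [← Nat.card_eq_finsetCard]
  refine Nat.card_congr (Equiv.subtypeEquivRight fun p => ?_)
  rw [mem_filter, mem_monicIrreducibleUpTo]
  constructor
  · rintro ⟨⟨-, hm, hi⟩, rfl⟩
    exact ⟨hm, hi, rfl⟩
  · rintro ⟨hm, hi, rfl⟩
    exact ⟨⟨hd, hm, hi⟩, rfl⟩

variable [DecidableEq F]

theorem prod_pow_count_normalizedFactors {p : F[X]} (hp : p.Monic) {s : Finset F[X]}
    (hs : (normalizedFactors p).toFinset ⊆ s) :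
    ∏ π ∈ s, π ^ (normalizedFactors p).count π = p := by
  rw [← prod_subset hs fun π _ hπ => by
      rw [Multiset.count_eq_zero_of_notMem (mt Multiset.mem_toFinset.2 hπ), pow_zero],
    ← prod_multiset_count, prod_normalizedFactors_eq hp.ne_zero, hp.normalize_eq_self]

theorem count_normalizedFactors_prod_pow {s : Finset F[X]} (hs : ∀ π ∈ s, π.Monic ∧ Irreducible π)
    (e : F[X] → ℕ) (π : F[X]) :
    (normalizedFactors (∏ σ ∈ s, σ ^ e σ)).count π = if π ∈ s then e π else 0 := by
  set m := ∑ σ ∈ s, e σ • ({σ} : Multiset F[X])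
  have hmem : ∀ σ ∈ m, σ.Monic ∧ Irreducible σ := by
    intro σ hσ
    obtain ⟨τ, hτ, hστ⟩ := Multiset.mem_sum.1 hσ
    rw [Multiset.mem_singleton.1 (Multiset.mem_of_mem_nsmul hστ)]
    exact hs τ hτ
  have hprod : m.prod = ∏ σ ∈ s, σ ^ e σ := by simp [m, Multiset.prod_sum, Multiset.prod_nsmul]
  rw [← hprod, normalizedFactors_prod_eq m fun σ hσ => (hmem σ hσ).2,
    Multiset.map_congr rfl fun σ hσ => (hmem σ hσ).1.normalize_eq_self, Multiset.map_id']
  simp [m, Multiset.count_sum', Multiset.count_singleton]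

theorem natDegree_eq_sum_count_normalizedFactors {p : F[X]} (hp : p.Monic) {s : Finset F[X]}
    (hs : ∀ π ∈ s, π.Monic) (hfac : (normalizedFactors p).toFinset ⊆ s) :
    p.natDegree = ∑ π ∈ s, (normalizedFactors p).count π * π.natDegree := by
  conv_lhs => rw [← prod_pow_count_normalizedFactors hp hfac]
  exact natDegree_prod_pow_of_monic hs _

theorem normalizedFactors_toFinset_subset {p : F[X]} (hp : p.Monic) {s : Finset F[X]}
    (hcover : ∀ π : F[X], π.Monic → Irreducible π → π.natDegree ≤ p.natDegree → π ∈ s) :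
    (normalizedFactors p).toFinset ⊆ s := by
  intro π hπ
  obtain ⟨hirr, hmon, hdvd⟩ :=
    (Polynomial.mem_normalizedFactors_iff hp.ne_zero).1 (Multiset.mem_toFinset.1 hπ)
  exact hcover π hmon hirr (natDegree_le_of_dvd hdvd hp.ne_zero)

noncomputable def factorDegrees (p : F[X]) : F[X] →₀ ℕ :=
  Finsupp.onFinset (normalizedFactors p).toFinset
    (fun π => π.natDegree * (normalizedFactors p).count π)
    fun _ h => Multiset.mem_toFinset.2 (Multiset.count_ne_zero.1 (right_ne_zero_of_mul h))

theorem factorDegrees_apply (p π : F[X]) :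
    factorDegrees p π = π.natDegree * (normalizedFactors p).count π :=
  Finsupp.onFinset_apply

theorem card_filter_dvd_finsuppAntidiag {s : Finset F[X]} {n : ℕ}
    (hs : ∀ π ∈ s, π.Monic ∧ Irreducible π)
    (hcover : ∀ π : F[X], π.Monic → Irreducible π → π.natDegree ≤ n → π ∈ s) :
    #{l ∈ s.finsuppAntidiag n | ∀ π ∈ s, π.natDegree ∣ l π} =
      Nat.card {p : F[X] // p.Monic ∧ p.natDegree = n} := by
  set S := {l ∈ s.finsuppAntidiag n | ∀ π ∈ s, π.natDegree ∣ l π}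
  have hfac {p : F[X]} (hp : p.Monic) (hpn : p.natDegree = n) :=
    normalizedFactors_toFinset_subset hp (s := s) (hpn ▸ hcover)
  -- `l π` is `deg π` times the exponent of `π`
  let toPoly (l : F[X] →₀ ℕ) : F[X] := ∏ π ∈ s, π ^ (l π / π.natDegree)
  have toPoly_mem (l : F[X] →₀ ℕ) (hl : l ∈ S) :
      (toPoly l).Monic ∧ (toPoly l).natDegree = n := by
    obtain ⟨⟨hsum, -⟩, hdvd⟩ := by simpa only [S, mem_filter, mem_finsuppAntidiag] using hl
    refine ⟨monic_prod_of_monic _ _ fun π hπ => (hs π hπ).1.pow _, ?_⟩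
    rw [natDegree_prod_pow_of_monic (fun π hπ => (hs π hπ).1), ← hsum]
    exact sum_congr rfl fun π hπ => Nat.div_mul_cancel (hdvd π hπ)
  have factorDegrees_mem (p : F[X]) (hp : p.Monic) (hpn : p.natDegree = n) :
      factorDegrees p ∈ S := by
    simp only [S, mem_filter, mem_finsuppAntidiag, factorDegrees_apply]
    refine ⟨⟨?_, Finsupp.support_onFinset_subset.trans (hfac hp hpn)⟩,
      fun π _ => dvd_mul_right _ _⟩
    rw [← hpn, natDegree_eq_sum_count_normalizedFactors hp (fun π hπ => (hs π hπ).1) (hfac hp hpn)]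
    exact sum_congr rfl fun π _ => mul_comm _ _
  have factorDegrees_toPoly (l : F[X] →₀ ℕ) (hl : l ∈ S) : factorDegrees (toPoly l) = l := by
    obtain ⟨⟨-, hsupp⟩, hdvd⟩ := by simpa only [S, mem_filter, mem_finsuppAntidiag] using hl
    ext π
    rw [factorDegrees_apply, count_normalizedFactors_prod_pow hs]
    split_ifs with hπ
    · exact Nat.mul_div_cancel' (hdvd π hπ)
    · rw [mul_zero, eq_comm, ← Finsupp.notMem_support_iff]
      exact fun h => hπ (hsupp h)
  have toPoly_factorDegrees (p : F[X]) (hp : p.Monic) (hpn : p.natDegree = n) :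
      toPoly (factorDegrees p) = p := by
    conv_rhs => rw [← prod_pow_count_normalizedFactors hp (hfac hp hpn)]
    exact prod_congr rfl fun π hπ => by
      rw [factorDegrees_apply, Nat.mul_div_cancel_left _ (hs π hπ).2.natDegree_pos]
  rw [← Nat.card_eq_finsetCard]
  exact Nat.card_congr
    { toFun l := ⟨toPoly l, toPoly_mem l l.2⟩
      invFun p := ⟨factorDegrees p, factorDegrees_mem p p.2.1 p.2.2⟩
      left_inv l := Subtype.ext (factorDegrees_toPoly l l.2)
      right_inv p := Subtype.ext (toPoly_factorDegrees p p.2.1 p.2.2) }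

end Polynomial

theorem coeff_prod_inv_one_sub_pow_general (F : Type*) [Field F] [Fintype F]
    (q : ℕ) (hq : q = Fintype.card F)
    (N : ℕ → ℕ)
    (hN : ∀ d, N d = Nat.card {p : F[X] // p.Monic ∧ Irreducible p ∧ p.natDegree = d})
    (n : ℕ) :
    PowerSeries.coeff n
      (∏ d ∈ Finset.Icc 1 n, ((1 - (PowerSeries.X : PowerSeries ℚ) ^ d)⁻¹) ^ N d)
      = (q : ℚ) ^ n := by
  classical
  set T := monicIrreducibleUpTo F n
  have hT : ∀ π ∈ T, π.Monic ∧ Irreducible π := fun π hπ => (mem_monicIrreducibleUpTo.1 hπ).2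
  have hdeg : ∀ π ∈ T, π.natDegree ∈ Icc 1 n := fun π hπ =>
    mem_Icc.2 ⟨(hT π hπ).2.natDegree_pos, (mem_monicIrreducibleUpTo.1 hπ).1⟩
  have hregroup : ∏ d ∈ Icc 1 n, ((1 - PowerSeries.X ^ d : ℚ⟦X⟧)⁻¹) ^ N d =
      ∏ π ∈ T, (1 - PowerSeries.X ^ π.natDegree : ℚ⟦X⟧)⁻¹ := by
    rw [← prod_pow_card_fiberwise hdeg fun d => (1 - PowerSeries.X ^ d : ℚ⟦X⟧)⁻¹]
    exact prod_congr rfl fun d hd => by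
      rw [hN, card_filter_natDegree_eq_monicIrreducibleUpTo (mem_Icc.1 hd).2]
  rw [hregroup, coeff_prod_inv_one_sub_X_pow fun π hπ => (mem_Icc.1 (hdeg π hπ)).1,
    card_filter_dvd_finsuppAntidiag hT fun π hm hi hle => mem_monicIrreducibleUpTo.2 ⟨hle, hm, hi⟩,
    natCard_monic_natDegree_eq, hq, Nat.card_eq_fintype_card, Nat.cast_pow]

/-- The coefficient of `X^n` in `∏_{d=1}^{n} ((1 - X^d)⁻¹)^{N(d)}` equals `q^n`,
where `N(d)` is the number of monic irreducible degree-`d` polynomials over the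
finite field `F` with `q` elements. -/
theorem coeff_prod_inv_one_sub_pow (F : Type*) [Field F] [Fintype F]
    (q : ℕ) (hq : q = Fintype.card F)
    (N : ℕ → ℕ)
    (hN : ∀ d, N d = Nat.card {p : F[X] // p.Monic ∧ Irreducible p ∧ p.natDegree = d})
    (n : ℕ) (hn : 1 ≤ n) :
    PowerSeries.coeff n
      (∏ d ∈ Finset.Icc 1 n, ((1 - (PowerSeries.X : PowerSeries ℚ) ^ d)⁻¹) ^ N d)
      = (q : ℚ) ^ n :=
  coeff_prod_inv_one_sub_pow_general F q hq N hN n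
end

section
/- Let F be a finite field with q elements. For every n ≥ 2, the number of monic square-free polynomials of degree n in F[X] is exactly q^n − q^{n−1}. -/
/-!
Every monic polynomial factors uniquely as `g * h ^ 2` with `g, h` monic and `g` square-free.
Sorting the `q ^ n` monic polynomials of degree `n` by `k = deg h` gives
`q ^ n = ∑_{k ≤ n/2} s (n - 2k) * q ^ k`, where `s m` counts the monic square-free polynomials
of degree `m`. The terms with `k ≥ 1` are `q` times the same sum for `n - 2`, i.e. `q ^ (n - 1)`.
-/

open Polynomial UniqueFactorizationMonoid Finset

theorem eq_pow_sub_pow_of_sum_range {q : ℕ} {s : ℕ → ℕ}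
    (hs : ∀ n, ∑ k ∈ range (n / 2 + 1), s (n - 2 * k) * q ^ k = q ^ n) {n : ℕ} (hn : 2 ≤ n) :
    s n = q ^ n - q ^ (n - 1) := by
  have hsplit := hs n
  rw [sum_range_succ', show n / 2 = (n - 2) / 2 + 1 by omega] at hsplit
  have htail : ∑ k ∈ range ((n - 2) / 2 + 1), s (n - 2 * (k + 1)) * q ^ (k + 1) = q ^ (n - 1) := by
    rw [show n - 1 = n - 2 + 1 by omega, pow_succ, ← hs (n - 2), sum_mul]
    refine sum_congr rfl fun k _ => ?_
    rw [show n - 2 * (k + 1) = n - 2 - 2 * k by omega, pow_succ, mul_assoc]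
  rw [htail] at hsplit
  simp only [mul_zero, Nat.sub_zero, pow_zero, mul_one] at hsplit
  omega

section UniqueFactorizationMonoid

variable {R : Type*} [CommMonoidWithZero R] [UniqueFactorizationMonoid R]

theorem exists_squarefree_mul_sq (x : R) : ∃ a b : R, Squarefree a ∧ x = a * b ^ 2 := by
  induction x using WfDvdMonoid.induction_on_irreducible with
  | zero => exact ⟨1, 0, squarefree_one, by simp⟩
  | unit u hu => exact ⟨u, 1, hu.squarefree, by simp⟩
  | mul z p _ hp ih =>
    obtain ⟨a, b, ha, rfl⟩ := ih
    by_cases hpa : p ∣ a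
    · obtain ⟨c, rfl⟩ := hpa
      exact ⟨c, p * b, ha.of_mul_right, by simp only [sq]; ac_rfl⟩
    · refine ⟨p * a, b, ?_, (mul_assoc p a _).symm⟩
      exact squarefree_mul_iff.mpr ⟨hp.isRelPrime_iff_not_dvd.mpr hpa, hp.squarefree, ha⟩

theorem associated_of_squarefree_mul_sq_eq {a₁ b₁ a₂ b₂ : R} (ha₁ : Squarefree a₁)
    (ha₂ : Squarefree a₂) (hb₁ : b₁ ≠ 0) (hb₂ : b₂ ≠ 0) (h : a₁ * b₁ ^ 2 = a₂ * b₂ ^ 2) :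
    Associated b₁ b₂ := by
  classical
  let := UniqueFactorizationMonoid.strongNormalizationMonoid (α := R)
  have : Nontrivial R := nontrivial_of_ne _ _ hb₁
  have hfactors : normalizedFactors a₁ + 2 • normalizedFactors b₁
      = normalizedFactors a₂ + 2 • normalizedFactors b₂ := by
    rw [← normalizedFactors_pow, ← normalizedFactors_pow,
      ← normalizedFactors_mul ha₁.ne_zero (pow_ne_zero 2 hb₁),
      ← normalizedFactors_mul ha₂.ne_zero (pow_ne_zero 2 hb₂), h]
  rw [associated_iff_normalizedFactors_eq_normalizedFactors hb₁ hb₂]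
  ext p
  have h₁ := Multiset.nodup_iff_count_le_one.mp
    ((squarefree_iff_nodup_normalizedFactors ha₁.ne_zero).mp ha₁) p
  have h₂ := Multiset.nodup_iff_count_le_one.mp
    ((squarefree_iff_nodup_normalizedFactors ha₂.ne_zero).mp ha₂) p
  -- The counts of `p` in `aᵢ` are at most `1`, so `count p aᵢ + 2 * count p bᵢ` determines both.
  have hp := congrArg (Multiset.count p) hfactors
  simp only [Multiset.count_add, Multiset.count_nsmul] at hp
  omega

end UniqueFactorizationMonoid

namespace Polynomial

theorem eq_of_squarefree_mul_sq_eq {R : Type*} [CommRing R] [IsDomain R]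
    [UniqueFactorizationMonoid R] {g₁ h₁ g₂ h₂ : R[X]} (hg₁ : Squarefree g₁) (hh₁ : h₁.Monic)
    (hg₂ : Squarefree g₂) (hh₂ : h₂.Monic) (h : g₁ * h₁ ^ 2 = g₂ * h₂ ^ 2) :
    g₁ = g₂ ∧ h₁ = h₂ := by
  have hh : h₁ = h₂ := eq_of_monic_of_associated hh₁ hh₂
    (associated_of_squarefree_mul_sq_eq hg₁ hg₂ hh₁.ne_zero hh₂.ne_zero h)
  subst hh
  exact ⟨mul_right_cancel₀ (pow_ne_zero 2 hh₁.ne_zero) h, rfl⟩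

variable {F : Type*} [Field F]

theorem Monic.exists_squarefree_mul_sq {f : F[X]} (hf : f.Monic) :
    ∃ g h : F[X], g.Monic ∧ Squarefree g ∧ h.Monic ∧ f = g * h ^ 2 := by
  obtain ⟨a, b, ha, rfl⟩ := _root_.exists_squarefree_mul_sq f
  have hb : b ≠ 0 := by
    rintro rfl
    simp at hf
  set u := b.leadingCoeff
  have hu : u ≠ 0 := leadingCoeff_ne_zero.mpr hb
  have hC : C (u ^ 2) * C u⁻¹ ^ 2 = 1 := by
    rw [← C_pow, ← C_mul, ← mul_pow, mul_inv_cancel₀ hu, one_pow, C_1]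
  have heq : a * b ^ 2 = a * C (u ^ 2) * (b * C u⁻¹) ^ 2 := by
    linear_combination (-(a * b ^ 2)) * hC
  have hh : (b * C u⁻¹).Monic := monic_mul_leadingCoeff_inv hb
  refine ⟨a * C (u ^ 2), b * C u⁻¹, ?_, ?_, hh, heq⟩
  · rw [heq] at hf
    exact (hh.pow 2).of_mul_monic_right hf
  · have hunit : IsUnit (C (u ^ 2)) := isUnit_C.mpr (pow_ne_zero 2 hu).isUnit
    exact (associated_mul_unit_right a _ hunit).squarefree_iff.mp ha

theorem Monic.natDegree_mul_sq {g h : F[X]} (hg : g.Monic) (hh : h.Monic) :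
    (g * h ^ 2).natDegree = g.natDegree + 2 * h.natDegree := by
  rw [hg.natDegree_mul (hh.pow 2), hh.natDegree_pow, mul_comm]

noncomputable def squarefreeMulSqEquiv (n : ℕ) :
    (Σ k : Fin (n / 2 + 1), {g : F[X] // g.Monic ∧ Squarefree g ∧ g.natDegree = n - 2 * k} ×
      {h : F[X] // h.Monic ∧ h.natDegree = k}) ≃ {f : F[X] // f.Monic ∧ f.natDegree = n} :=
  Equiv.ofBijective
    (fun t => ⟨t.2.1 * t.2.2 ^ 2, t.2.1.2.1.mul (t.2.2.2.1.pow 2), by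
      rw [t.2.1.2.1.natDegree_mul_sq t.2.2.2.1, t.2.1.2.2.2, t.2.2.2.2]
      have := t.1.isLt
      omega⟩)
    (by
      constructor
      · rintro ⟨k₁, g₁, h₁⟩ ⟨k₂, g₂, h₂⟩ heq
        obtain ⟨hg, hh⟩ := eq_of_squarefree_mul_sq_eq g₁.2.2.1 h₁.2.1 g₂.2.2.1 h₂.2.1
          (congrArg Subtype.val heq)
        obtain rfl : k₁ = k₂ := Fin.ext (by rw [← h₁.2.2, ← h₂.2.2, hh])
        rw [Subtype.ext hg, Subtype.ext hh]
      · rintro ⟨f, hf, rfl⟩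
        obtain ⟨g, h, hg, hgs, hh, rfl⟩ := hf.exists_squarefree_mul_sq
        have hdeg := hg.natDegree_mul_sq hh
        exact ⟨⟨⟨h.natDegree, by omega⟩, ⟨g, hg, hgs, by simp only; omega⟩, ⟨h, hh, rfl⟩⟩, rfl⟩)

section Fintype

variable [Fintype F]

theorem card_monic_natDegree_eq (n : ℕ) :
    Nat.card {f : F[X] // f.Monic ∧ f.natDegree = n} = Fintype.card F ^ n := by
  simp [Nat.card_congr ((monicEquivDegreeLT n).trans (degreeLTEquiv F n).toEquiv)]

instance (n : ℕ) : Finite {f : F[X] // f.Monic ∧ f.natDegree = n} :=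
  .of_equiv _ ((monicEquivDegreeLT n).trans (degreeLTEquiv F n).toEquiv).symm

instance (n : ℕ) : Finite {f : F[X] // f.Monic ∧ Squarefree f ∧ f.natDegree = n} :=
  .of_injective (fun f => (⟨f.1, f.2.1, f.2.2.2⟩ : {f : F[X] // f.Monic ∧ f.natDegree = n}))
    fun _ _ h => Subtype.ext (congrArg Subtype.val h :)

theorem sum_card_monic_squarefree_mul_pow (n : ℕ) :
    ∑ k ∈ range (n / 2 + 1),
      Nat.card {f : F[X] // f.Monic ∧ Squarefree f ∧ f.natDegree = n - 2 * k} * Fintype.card F ^ k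
      = Fintype.card F ^ n := by
  rw [← card_monic_natDegree_eq, ← Nat.card_congr (squarefreeMulSqEquiv n), Nat.card_sigma,
    ← Fin.sum_univ_eq_sum_range]
  simp only [Nat.card_prod, card_monic_natDegree_eq]

end Fintype

end Polynomial

/-- For `n ≥ 2`, the number of monic square-free polynomials of degree `n` over a
finite field `F` with `q` elements is `q^n - q^(n-1)`. -/
theorem card_monic_squarefree (F : Type*) [Field F] [Fintype F]
    (q : ℕ) (hq : q = Fintype.card F) (n : ℕ) (hn : 2 ≤ n) :
    Nat.card {f : F[X] // f.Monic ∧ Squarefree f ∧ f.natDegree = n}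
      = q ^ n - q ^ (n - 1) := by
  subst hq
  exact eq_pow_sub_pow_of_sum_range
    (s := fun m => Nat.card {f : F[X] // f.Monic ∧ Squarefree f ∧ f.natDegree = m})
    sum_card_monic_squarefree_mul_pow hn
end

section
/- Let F be a finite field with q elements and n ≥ 2. For a monic square-free polynomial f of degree n over F, let μ(f) = (−1)^{d(f)} where d(f) is the number of monic irreducible factors of f. Then ∑_{f ∈ S_n} μ(f) = 0. -/
/-!
Summing `(-1) ^ #S` over the pairs `(f, S)` with `f` monic of degree `n` and `S` a set of
prime factors of `f` gives `0` for `n ≥ 1`, since `f` has at least one prime factor. The map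
`(f, S) ↦ (∏ S, f / ∏ S)` identifies these pairs with the pairs `(g, h)` of monic polynomials
with `g` squarefree and `deg g + deg h = n`, so `∑_{i+j=n} M_i q^j = 0` for `n ≥ 1`, where `M_i`
is the Möbius sum in degree `i`. Subtracting `q` times the identity for `n - 1` leaves `M_n = 0`.
-/

open Polynomial UniqueFactorizationMonoid Finset

namespace UniqueFactorizationMonoid

section NormalizationMonoid

variable {M : Type*} [CommMonoidWithZero M] [NormalizationMonoid M] [UniqueFactorizationMonoid M]
  {a : M} {S : Finset M}

theorem prod_dvd_of_subset_primeFactors (hS : S ⊆ primeFactors a) : ∏ p ∈ S, p ∣ a :=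
  (prod_dvd_prod_of_subset S _ id hS).trans radical_dvd_self

theorem primeFactors_prod_of_subset_primeFactors (hS : S ⊆ primeFactors a) :
    primeFactors (∏ p ∈ S, p) = S := by
  classical
  have hfac : ∀ p ∈ S, p ∈ normalizedFactors a := fun p hp => mem_primeFactors.mp (hS hp)
  have hval : normalizedFactors (∏ p ∈ S, p) = S.val := by
    rw [prod_eq_multiset_prod, Multiset.map_id',
      normalizedFactors_prod_eq _ fun p hp => irreducible_of_normalized_factor p (hfac p hp)]
    conv_rhs => rw [← Multiset.map_id S.val]
    exact Multiset.map_congr rfl fun p hp => normalize_normalized_factor p (hfac p hp)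
  rw [← toFinset_normalizedFactors, hval, val_toFinset]

theorem squarefree_prod_of_subset_primeFactors (hS : S ⊆ primeFactors a) :
    Squarefree (∏ p ∈ S, p) := by
  have h : radical (∏ p ∈ S, p) = ∏ p ∈ S, p := by
    rw [radical, primeFactors_prod_of_subset_primeFactors hS]; rfl
  exact h ▸ squarefree_radical

theorem sum_powerset_primeFactors_neg_one_pow (ha : a ≠ 0) (hu : ¬IsUnit a) :
    ∑ S ∈ (primeFactors a).powerset, (-1 : ℤ) ^ #S = 0 :=
  sum_powerset_neg_one_pow_card_of_nonempty <|
    nonempty_iff_ne_empty.mpr <| (primeFactors_eq_empty_iff ha).not.mpr hu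

end NormalizationMonoid

theorem radical_eq_self {M : Type*} [CommMonoidWithZero M] [StrongNormalizationMonoid M]
    [UniqueFactorizationMonoid M] {a : M} (ha : Squarefree a) (hn : normalize a = a) :
    radical a = a := by
  nontriviality M
  rw [radical, ← prod_val, primeFactors_val_eq_normalizedFactors ha.isRadical,
    prod_normalizedFactors_eq ha.ne_zero, hn]

theorem prod_mul_div_prod_of_subset_primeFactors {R : Type*} [EuclideanDomain R]
    [NormalizationMonoid R] [UniqueFactorizationMonoid R] {a : R} {S : Finset R}
    (hS : S ⊆ primeFactors a) : (∏ p ∈ S, p) * (a / ∏ p ∈ S, p) = a :=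
  EuclideanDomain.mul_div_cancel' (prod_ne_zero_iff.mpr fun p hp =>
    (prime_of_normalized_factor p (mem_primeFactors.mp (hS hp))).ne_zero)
    (prod_dvd_of_subset_primeFactors hS)

end UniqueFactorizationMonoid

namespace Polynomial

section MonicOfDegree

variable (F : Type*) [Field F] [Fintype F]

noncomputable def monicOfDegree (n : ℕ) : Finset F[X] :=
  univ.map ⟨fun c => X ^ n + ((degreeLTEquiv F n).symm c : F[X]),
    (add_right_injective _).comp (Subtype.val_injective.comp (degreeLTEquiv F n).symm.injective)⟩

theorem card_monicOfDegree (n : ℕ) : #(monicOfDegree F n) = Fintype.card F ^ n := by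
  simp [monicOfDegree]

variable {F}

theorem mem_monicOfDegree {n : ℕ} {f : F[X]} : f ∈ monicOfDegree F n ↔ IsMonicOfDegree f n := by
  simp only [monicOfDegree, mem_map, mem_univ, true_and, Function.Embedding.coeFn_mk]
  constructor
  · rintro ⟨c, rfl⟩
    have hc : degree ((degreeLTEquiv F n).symm c : F[X]) < n :=
      mem_degreeLT.mp ((degreeLTEquiv F n).symm c).2
    refine ⟨?_, monic_X_pow_add hc⟩
    rw [natDegree_add_eq_left_of_degree_lt (by rwa [degree_X_pow]), natDegree_X_pow]
  · intro hf
    have hdeg : degree (f - X ^ n) < n := by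
      have hfn : degree f = n := (degree_eq_iff_natDegree_eq hf.ne_zero).mpr hf.natDegree_eq
      refine hfn ▸ degree_sub_lt_left (by rw [hfn, degree_X_pow]) hf.ne_zero ?_
      rw [hf.monic.leadingCoeff, leadingCoeff_X_pow]
    refine ⟨degreeLTEquiv F n ⟨f - X ^ n, mem_degreeLT.mpr hdeg⟩, ?_⟩
    rw [LinearEquiv.symm_apply_apply, add_sub_cancel]

end MonicOfDegree

variable {F : Type*} [Field F] [DecidableEq F]

theorem monic_of_mem_primeFactors {f p : F[X]} (hp : p ∈ primeFactors f) : p.Monic := by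
  rw [mem_primeFactors] at hp
  exact (normalize_eq_self_iff_monic (prime_of_normalized_factor p hp).ne_zero).mp
    (normalize_normalized_factor p hp)

theorem monic_prod_of_subset_primeFactors {f : F[X]} {S : Finset F[X]}
    (hS : S ⊆ primeFactors f) : (∏ p ∈ S, p).Monic :=
  monic_prod_of_monic _ _ fun _ hp => monic_of_mem_primeFactors (hS hp)

theorem card_monic_irreducible_dvd {f : F[X]} (hf : f ≠ 0) :
    Nat.card {g : F[X] // g.Monic ∧ Irreducible g ∧ g ∣ f} = #(primeFactors f) := by
  rw [← Nat.card_eq_finsetCard]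
  exact Nat.card_congr <| Equiv.subtypeEquivRight fun g => by
    rw [mem_primeFactors, Polynomial.mem_normalizedFactors_iff hf, and_left_comm]

variable [Fintype F]

open scoped Classical in
theorem sum_sum_powerset_primeFactors_eq_sum_antidiagonal {M : Type*} [AddCommMonoid M] (φ : Finset F[X] → M)
    (n : ℕ) :
    ∑ f ∈ monicOfDegree F n, ∑ S ∈ (primeFactors f).powerset, φ S =
      ∑ ij ∈ antidiagonal n, ∑ gh ∈ {g ∈ monicOfDegree F ij.1 | Squarefree g} ×ˢ
        monicOfDegree F ij.2, φ (primeFactors gh.1) := by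
  rw [sum_sigma', sum_sigma']
  refine sum_nbij'
    (fun x => ⟨((∏ p ∈ x.2, p).natDegree, (x.1 / ∏ p ∈ x.2, p).natDegree),
      (∏ p ∈ x.2, p, x.1 / ∏ p ∈ x.2, p)⟩)
    (fun y => ⟨y.2.1 * y.2.2, primeFactors y.2.1⟩) ?_ ?_ ?_ ?_ ?_
  · rintro ⟨f, S⟩ hx
    simp only [mem_sigma, mem_monicOfDegree, mem_powerset] at hx
    obtain ⟨hf, hS⟩ := hx
    have hgh := prod_mul_div_prod_of_subset_primeFactors hS
    have hg := monic_prod_of_subset_primeFactors hS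
    have hh := hg.of_mul_monic_left (hgh ▸ hf.monic)
    simp only [mem_sigma, HasAntidiagonal.mem_antidiagonal, mem_product, mem_filter,
      mem_monicOfDegree]
    refine ⟨?_, ⟨⟨rfl, hg⟩, squarefree_prod_of_subset_primeFactors hS⟩, rfl, hh⟩
    rw [← hg.natDegree_mul hh, hgh, hf.natDegree_eq]
  · rintro ⟨⟨i, j⟩, g, h⟩ hy
    simp only [mem_sigma, HasAntidiagonal.mem_antidiagonal, mem_product, mem_filter,
      mem_monicOfDegree] at hy
    obtain ⟨rfl, ⟨hg, -⟩, hh⟩ := hy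
    simp only [mem_sigma, mem_monicOfDegree, mem_powerset]
    refine ⟨hg.mul hh, ?_⟩
    rw [primeFactors_mul_eq_union hg.ne_zero hh.ne_zero]
    exact subset_union_left
  · rintro ⟨f, S⟩ hx
    simp only [mem_sigma, mem_monicOfDegree, mem_powerset] at hx
    exact Sigma.ext (prod_mul_div_prod_of_subset_primeFactors hx.2)
      (heq_of_eq (primeFactors_prod_of_subset_primeFactors hx.2))
  · rintro ⟨⟨i, j⟩, g, h⟩ hy
    simp only [mem_sigma, HasAntidiagonal.mem_antidiagonal, mem_product, mem_filter,
      mem_monicOfDegree] at hy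
    obtain ⟨-, ⟨hg, hsq⟩, hh⟩ := hy
    have hrad : ∏ p ∈ primeFactors g, p = g := radical_eq_self hsq hg.monic.normalize_eq_self
    simp only [hrad, mul_div_cancel_left₀ h hg.ne_zero, hg.natDegree_eq, hh.natDegree_eq]
  · rintro ⟨f, S⟩ hx
    simp only [mem_sigma, mem_monicOfDegree, mem_powerset] at hx
    simp only [primeFactors_prod_of_subset_primeFactors hx.2]

variable (F) in
open scoped Classical in
noncomputable def moebiusSum (n : ℕ) : ℤ :=
  ∑ f ∈ monicOfDegree F n with Squarefree f, (-1) ^ #(primeFactors f)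

variable (F) in
theorem sum_antidiagonal_moebiusSum_mul_card_pow {n : ℕ} (hn : n ≠ 0) :
    ∑ ij ∈ antidiagonal n, moebiusSum F ij.1 * Fintype.card F ^ ij.2 = 0 := by
  classical
  have hzero : ∑ f ∈ monicOfDegree F n, ∑ S ∈ (primeFactors f).powerset, (-1 : ℤ) ^ #S = 0 := by
    refine sum_eq_zero fun f hf => ?_
    have hf := mem_monicOfDegree.mp hf
    refine sum_powerset_primeFactors_neg_one_pow hf.ne_zero fun hu => hn ?_
    rw [← hf.natDegree_eq, natDegree_eq_zero_of_isUnit hu]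
  rw [← hzero, sum_sum_powerset_primeFactors_eq_sum_antidiagonal]
  refine sum_congr rfl fun ij _ => ?_
  rw [sum_product, moebiusSum, sum_mul]
  refine sum_congr rfl fun g _ => ?_
  simp [card_monicOfDegree, mul_comm]

variable (F) in
theorem moebiusSum_eq_zero {n : ℕ} (hn : 2 ≤ n) : moebiusSum F n = 0 := by
  obtain ⟨m, rfl⟩ := Nat.exists_eq_add_of_le' hn
  have h := sum_antidiagonal_moebiusSum_mul_card_pow F (n := m + 2) (by omega)
  simpa only [Nat.sum_antidiagonal_succ', pow_zero, mul_one, pow_succ, ← mul_assoc, ← sum_mul,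
    sum_antidiagonal_moebiusSum_mul_card_pow F (n := m + 1) (by omega), zero_mul,
    add_zero] using h

end Polynomial

theorem sum_moebius_squarefree_general (F : Type*) [Field F] [Fintype F]
    (n : ℕ) (hn : 2 ≤ n) :
    (∑ᶠ f ∈ {f : F[X] | f.Monic ∧ Squarefree f ∧ f.natDegree = n},
        ((-1 : ℤ) ^ Nat.card {g : F[X] // g.Monic ∧ Irreducible g ∧ g ∣ f}))
      = 0 := by
  classical
  have hset : {f : F[X] | f.Monic ∧ Squarefree f ∧ f.natDegree = n} =
      ↑{f ∈ monicOfDegree F n | Squarefree f} := by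
    ext f
    simp only [Set.mem_ofPred_eq, coe_filter, mem_monicOfDegree, isMonicOfDegree_iff']
    tauto
  rw [hset, finsum_mem_coe_finset, ← moebiusSum_eq_zero F hn, moebiusSum]
  refine sum_congr rfl fun f hf => ?_
  rw [card_monic_irreducible_dvd (mem_monicOfDegree.mp (mem_filter.mp hf).1).ne_zero]

/-- For `n ≥ 2`, the sum over monic square-free degree-`n` polynomials `f` of
`(-1)^(d f)`, where `d f` is the number of monic irreducible factors of `f`, is `0`. -/
theorem sum_moebius_squarefree (F : Type*) [Field F] [Fintype F]
    (q : ℕ) (hq : q = Fintype.card F) (n : ℕ) (hn : 2 ≤ n) :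
    (∑ᶠ f ∈ {f : F[X] | f.Monic ∧ Squarefree f ∧ f.natDegree = n},
        ((-1 : ℤ) ^ Nat.card {g : F[X] // g.Monic ∧ Irreducible g ∧ g ∣ f}))
      = 0 :=
  sum_moebius_squarefree_general F n hn
end

section
/- Let q ≥ 2 be an integer (e.g. a prime power) and n ≥ 1. Then ∑_{λ ⊢ n} |GL_n(q)| / w_q(λ) = q^{n²−n}, as an identity in ℚ, where the sum is over all partitions λ of n, |GL_n(q)| = ∏_{i=0}^{n−1} (q^n − q^i), and w_q(λ) = ∏_i i^{m_i(λ)} · m_i(λ)! · (q^i − 1)^{m_i(λ)}. (By Lemma 3.1 of the paper, |GL_n(q)|/w_q(λ) is the number of F-stable maximal tori of GL_n(F̄_q) of type λ, so this is Steinberg's theorem that the total number of F-stable maximal tori is q^{n²−n}.) -/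
/-!
Put `x i = (q ^ i - 1)⁻¹`. Then `1 / w_q(λ) = x^λ / z_λ`, so the sum is `|GL_n(q)|` times the
cycle index `Z_n(x) = ∑_{λ ⊢ n} x^λ / z_λ` of the symmetric group. Removing one part `i` from a
partition (weighted by `i · m_i(λ)`, which sums to `n`) gives `n Z_n = ∑_{i=1}^n x_i Z_{n-i}`,
and this recursion determines `Z_n` from `Z_0 = 1`. The sequence `G_n = q^(n²-n) / |GL_n(q)|`
satisfies the same recursion: from `|GL_{n+1}(q)| = (q^(n+1) - 1) q^n |GL_n(q)|` one gets
`(q^(n+1) - 1) G_{n+1} = q^n G_n`, hence `∑_{m ≤ n} G_m = q^n G_n`, and these two identities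
give the recursion by induction on `n`.
-/

open Finset

theorem sum_Icc_one_eq_sum_range_sub {M : Type*} [AddCommMonoid M] (f : ℕ → M) (n : ℕ) :
    ∑ i ∈ Icc 1 n, f i = ∑ m ∈ range n, f (n - m) := by
  rw [range_eq_Ico, sum_Ico_reflect f 0 n.le_succ, Nat.add_sub_cancel_left, Nat.sub_zero]
  rfl

theorem Nat.Partition.sum_count_mul {n : ℕ} (P : n.Partition) :
    ∑ i ∈ Icc 1 n, P.parts.count i * i = n :=
  (mem_finsuppAntidiag.1 P.toFinsuppAntidiag_mem_finsuppAntidiag).1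

section CycleIndex

variable {K : Type*} [Field K] [CharZero K]

/-- The term `x^λ / z_λ` of the cycle index, for the multiset `λ` of parts. -/
def cycleWeight (x : ℕ → K) (s : Multiset ℕ) : K :=
  ∏ i ∈ s.toFinset, (x i / i) ^ s.count i / (s.count i).factorial

theorem cycleWeight_eq_prod_of_subset (x : ℕ → K) {s : Multiset ℕ} {t : Finset ℕ}
    (h : s.toFinset ⊆ t) :
    cycleWeight x s = ∏ i ∈ t, (x i / i) ^ s.count i / (s.count i).factorial := by
  refine prod_subset h fun i _ hi => ?_
  rw [Multiset.count_eq_zero_of_notMem (by simpa using hi)]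
  simp

theorem cycleWeight_cons (x : ℕ → K) {j : ℕ} (hj : j ≠ 0) (s : Multiset ℕ) :
    (s.count j + 1) * j * cycleWeight x (j ::ₘ s) = x j * cycleWeight x s := by
  classical
  have ht : (j ::ₘ s).toFinset ⊆ insert j s.toFinset := by simp
  rw [cycleWeight_eq_prod_of_subset x ht, cycleWeight_eq_prod_of_subset x (subset_insert j _),
    ← mul_prod_erase _ _ (mem_insert_self j _), ← mul_prod_erase _ _ (mem_insert_self j _),
    Multiset.count_cons_self]
  have hrest : ∀ i ∈ (insert j s.toFinset).erase j, (j ::ₘ s).count i = s.count i :=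
    fun i hi => Multiset.count_cons_of_ne (ne_of_mem_erase hi) s
  have hfactor : ∀ c : ℕ, (c + 1) * j * ((x j / j) ^ (c + 1) / (c + 1).factorial : K)
      = x j * ((x j / j) ^ c / c.factorial) := fun c => by
    have hj' : (j : K) ≠ 0 := Nat.cast_ne_zero.2 hj
    rw [Nat.factorial_succ, pow_succ]
    push_cast
    field_simp
  rw [prod_congr rfl fun i hi => by rw [hrest i hi], ← mul_assoc, hfactor, mul_assoc]

/-- The cycle index `Z(Sₙ) = ∑_{λ ⊢ n} p_λ / z_λ` of the symmetric group, evaluated at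
`p_i = x i`. -/
def cycleIndex (x : ℕ → K) (n : ℕ) : K := ∑ P : n.Partition, cycleWeight x P.parts

theorem sum_count_mul_mul_cycleWeight (x : ℕ → K) {n i : ℕ} (hi : i ∈ Icc 1 n) :
    ∑ P : n.Partition, (P.parts.count i * i : K) * cycleWeight x P.parts
      = x i * cycleIndex x (n - i) := by
  obtain ⟨hi1, hin⟩ := mem_Icc.1 hi
  let e := Nat.Partition.partitionWithPartEquiv hi1 hin
  rw [cycleIndex, mul_sum, ← sum_filter_of_ne (p := fun P : n.Partition => i ∈ P.parts),
    sum_subtype (p := fun P => i ∈ P.parts) _ (fun P => by simp), ← e.symm.sum_comp]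
  · refine sum_congr rfl fun Q _ => ?_
    simp only [e, Nat.Partition.partitionWithPartEquiv_symm_apply_parts, Multiset.count_cons_self]
    push_cast
    exact cycleWeight_cons x (by omega) Q.parts
  · intro P _ hP
    by_contra hiP
    simp [Multiset.count_eq_zero_of_notMem hiP] at hP

theorem cycleIndex_rec (x : ℕ → K) (n : ℕ) :
    (n : K) * cycleIndex x n = ∑ i ∈ Icc 1 n, x i * cycleIndex x (n - i) := by
  have hsplit : ∀ P : n.Partition, (n : K) * cycleWeight x P.parts
      = ∑ i ∈ Icc 1 n, (P.parts.count i * i : K) * cycleWeight x P.parts := fun P => by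
    rw [← sum_mul]
    congr 1
    exact_mod_cast P.sum_count_mul.symm
  rw [cycleIndex, mul_sum, sum_congr rfl fun P _ => hsplit P, sum_comm]
  exact sum_congr rfl fun i hi => sum_count_mul_mul_cycleWeight x hi

theorem eq_cycleIndex_of_rec (x : ℕ → K) {a : ℕ → K} (h0 : a 0 = 1)
    (hrec : ∀ n : ℕ, (n : K) * a n = ∑ i ∈ Icc 1 n, x i * a (n - i)) (n : ℕ) :
    a n = cycleIndex x n := by
  induction n using Nat.strong_induction_on with
  | _ n ih =>
    rcases n with _ | n
    · simp [h0, cycleIndex, cycleWeight]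
    · refine mul_left_cancel₀ (Nat.cast_ne_zero.2 n.succ_ne_zero) ?_
      rw [hrec, cycleIndex_rec]
      exact sum_congr rfl fun i hi => by rw [ih _ (by simp at hi; omega)]

end CycleIndex

section GeneralLinear

variable {K : Type*} [Field K]

def glCard (q : K) (n : ℕ) : K := ∏ i ∈ range n, (q ^ n - q ^ i)

theorem glCard_succ (q : K) (n : ℕ) :
    glCard q (n + 1) = (q ^ (n + 1) - 1) * q ^ n * glCard q n := by
  have hfactor : ∀ i ∈ range n, q ^ (n + 1) - q ^ (i + 1) = (q ^ n - q ^ i) * q :=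
    fun i _ => by ring
  rw [glCard, prod_range_succ', prod_congr rfl hfactor, prod_mul_distrib, prod_const, card_range,
    glCard]
  ring

theorem glCard_ne_zero {q : K} (hq0 : q ≠ 0) (hq : ∀ i ≠ 0, q ^ i ≠ 1) (n : ℕ) :
    glCard q n ≠ 0 := by
  induction n with
  | zero => simp [glCard]
  | succ n ih =>
    rw [glCard_succ]
    exact mul_ne_zero (mul_ne_zero (sub_ne_zero.2 (hq _ n.succ_ne_zero)) (pow_ne_zero _ hq0)) ih

def steinbergRatio (q : K) (n : ℕ) : K := q ^ (n ^ 2 - n) / glCard q n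

theorem steinbergRatio_zero (q : K) : steinbergRatio q 0 = 1 := by
  simp [steinbergRatio, glCard]

theorem steinbergRatio_succ {q : K} (hq0 : q ≠ 0) (hq : ∀ i ≠ 0, q ^ i ≠ 1) (n : ℕ) :
    (q ^ (n + 1) - 1) * steinbergRatio q (n + 1) = q ^ n * steinbergRatio q n := by
  have hexp : (n + 1) ^ 2 - (n + 1) = n ^ 2 - n + n + n := by
    have := Nat.le_self_pow two_ne_zero n
    ring_nf; omega
  have h1 : q ^ (n + 1) - 1 ≠ 0 := sub_ne_zero.2 (hq _ n.succ_ne_zero)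
  have h2 := glCard_ne_zero hq0 hq n
  rw [steinbergRatio, steinbergRatio, glCard_succ, hexp, pow_add q _ n, pow_add q _ n]
  field_simp

theorem sum_range_succ_steinbergRatio {q : K} (hq0 : q ≠ 0) (hq : ∀ i ≠ 0, q ^ i ≠ 1)
    (n : ℕ) : ∑ m ∈ range (n + 1), steinbergRatio q m = q ^ n * steinbergRatio q n := by
  induction n with
  | zero => simp [steinbergRatio_zero]
  | succ n ih =>
    rw [sum_range_succ, ih, ← steinbergRatio_succ hq0 hq]
    ring

theorem steinbergRatio_rec {q : K} (hq0 : q ≠ 0) (hq : ∀ i ≠ 0, q ^ i ≠ 1) (n : ℕ) :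
    (n : K) * steinbergRatio q n = ∑ m ∈ range n, steinbergRatio q m / (q ^ (n - m) - 1) := by
  induction n with
  | zero => simp
  | succ n ih =>
    have ha : q ^ (n + 1) - 1 ≠ 0 := sub_ne_zero.2 (hq _ n.succ_ne_zero)
    -- split `q^(n+1) - 1 = q^(n-m) (q^(m+1) - 1) + (q^(n-m) - 1)`
    have hterm : ∀ m ∈ range n,
        (q ^ (n + 1) - 1) * (steinbergRatio q (m + 1) / (q ^ (n + 1 - (m + 1)) - 1)) =
          q ^ n * (steinbergRatio q m / (q ^ (n - m) - 1)) + steinbergRatio q (m + 1) := by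
      intro m hm
      rw [mem_range] at hm
      have hpow : q ^ (n - m) * q ^ (m + 1) = q ^ (n + 1) := by rw [← pow_add]; congr 1; omega
      have hpow' : q ^ (n - m) * q ^ m = q ^ n := by rw [← pow_add]; congr 1; omega
      rw [Nat.add_sub_add_right]
      field_simp [sub_ne_zero.2 (hq (n - m) (by omega))]
      linear_combination q ^ (n - m) * steinbergRatio_succ hq0 hq m
        - steinbergRatio q (m + 1) * hpow + steinbergRatio q m * hpow'
    apply mul_left_cancel₀ ha
    rw [mul_sum, sum_range_succ', sum_congr rfl hterm, sum_add_distrib, ← mul_sum, ← ih,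
      Nat.sub_zero, mul_div_cancel₀ _ ha, add_assoc, ← sum_range_succ',
      sum_range_succ_steinbergRatio hq0 hq, Nat.cast_succ]
    linear_combination (↑n + 1) * steinbergRatio_succ hq0 hq n

theorem cycleIndex_inv_pow_sub_one [CharZero K] {q : K} (hq0 : q ≠ 0)
    (hq : ∀ i ≠ 0, q ^ i ≠ 1) (n : ℕ) :
    cycleIndex (fun i => (q ^ i - 1)⁻¹) n = steinbergRatio q n := by
  refine (eq_cycleIndex_of_rec _ (steinbergRatio_zero q) (fun n => ?_) n).symm
  rw [steinbergRatio_rec hq0 hq, sum_Icc_one_eq_sum_range_sub]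
  refine sum_congr rfl fun m hm => ?_
  rw [Nat.sub_sub_self (mem_range.1 hm).le, inv_mul_eq_div]

end GeneralLinear

theorem sum_tori_counts_general (q : ℕ) (hq : 2 ≤ q) (n : ℕ) :
    ∑ P : Nat.Partition n,
        (∏ i ∈ range n, ((q : ℚ) ^ n - (q : ℚ) ^ i)) /
          (∏ i ∈ Icc 1 n,
            ((i : ℚ) ^ (P.parts.count i) * (Nat.factorial (P.parts.count i) : ℚ) *
              ((q : ℚ) ^ i - 1) ^ (P.parts.count i)))
      = (q : ℚ) ^ (n ^ 2 - n) := by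
  have hq1 : (1 : ℚ) < q := by exact_mod_cast hq
  have hq0 : (q : ℚ) ≠ 0 := (zero_lt_one.trans hq1).ne'
  have hqi : ∀ i ≠ 0, (q : ℚ) ^ i ≠ 1 := fun i hi => (one_lt_pow₀ hq1 hi).ne'
  have hweight : ∀ P : n.Partition,
      ∏ i ∈ Icc 1 n, ((i : ℚ) ^ (P.parts.count i) * (Nat.factorial (P.parts.count i) : ℚ) *
        ((q : ℚ) ^ i - 1) ^ (P.parts.count i))
        = (cycleWeight (fun i => ((q : ℚ) ^ i - 1)⁻¹) P.parts)⁻¹ := fun P => by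
    have hsub : P.parts.toFinset ⊆ Icc 1 n := fun i hi =>
      have hi := Multiset.mem_toFinset.1 hi
      mem_Icc.2 ⟨P.parts_pos hi, Nat.Partition.le_of_mem_parts hi⟩
    rw [cycleWeight_eq_prod_of_subset _ hsub, ← prod_inv_distrib]
    refine prod_congr rfl fun i _ => ?_
    simp only [div_eq_mul_inv, mul_pow, inv_pow, mul_inv, inv_inv]
    ring
  simp_rw [hweight, div_inv_eq_mul, ← mul_sum]
  rw [← cycleIndex, cycleIndex_inv_pow_sub_one hq0 hqi, ← glCard, steinbergRatio,
    mul_div_cancel₀ _ (glCard_ne_zero hq0 hqi n)]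

/-- Steinberg's theorem via Lemma 3.1: summing the number of `F`-stable maximal tori of
each type `λ` over all partitions `λ` of `n` gives `q^(n²-n)`. -/
theorem sum_tori_counts (q : ℕ) (hq : 2 ≤ q) (n : ℕ) (hn : 1 ≤ n) :
    ∑ P : Nat.Partition n,
        (∏ i ∈ range n, ((q : ℚ) ^ n - (q : ℚ) ^ i)) /
          (∏ i ∈ Icc 1 n,
            ((i : ℚ) ^ (P.parts.count i) * (Nat.factorial (P.parts.count i) : ℚ) *
              ((q : ℚ) ^ i - 1) ^ (P.parts.count i)))
      = (q : ℚ) ^ (n ^ 2 - n) :=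
  sum_tori_counts_general q hq n
end

section
/- Let x be a real number with 0 < x < 1 and n ≥ 1. Then ∑_{λ ⊢ n} [∏_{j=1}^{n} (1 − x^j)] / [∏_i i^{m_i(λ)} · m_i(λ)! · (1 − x^i)^{m_i(λ)}] = 1, where the sum is over all partitions λ of n. (This is Cayley's identity; with x = 1/q it says that λ ↦ (number of F-stable maximal tori of GL_n(F̄_q) of type λ)/q^{n²−n} is a probability distribution on partitions of n.) -/
/-!
The weight `w(λ) = ∏ᵢ 1 / (i^{mᵢ} mᵢ! (1 - xⁱ)^{mᵢ})` of a partition is what the exponential formula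
extracts from `exp (∑ᵢ tⁱ / (i (1 - xⁱ)))`, and `Wₙ = ∑_{λ ⊢ n} w(λ)` satisfies
`n Wₙ = ∑_{k<n} W_k / (1 - x^{n-k})`: weight each `λ` by `n = ∑ᵢ i mᵢ(λ)` and remove one part `i`.
The coefficients `1 / (x;x)ₙ` of Euler's product `∏ₖ 1 / (1 - t xᵏ)` satisfy the same recursion, by
induction and the split `1 - xⁿ = (1 - x^{n-k}) + x^{n-k} (1 - xᵏ)`. In characteristic zero such a
recursion determines a sequence from its first term, so `Wₙ (x;x)ₙ = 1`.
-/

open Finset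

namespace Nat.Partition

theorem toFinset_parts_subset_Icc {n : ℕ} (P : n.Partition) : P.parts.toFinset ⊆ Icc 1 n :=
  fun _ hi => mem_Icc.mpr ⟨P.parts_pos (Multiset.mem_toFinset.mp hi),
    le_of_mem_parts (Multiset.mem_toFinset.mp hi)⟩

theorem sum_mul_count_parts {n : ℕ} (P : n.Partition) :
    ∑ i ∈ Icc 1 n, i * P.parts.count i = n := by
  conv_rhs => rw [← P.parts_sum, sum_multiset_count_of_subset _ _ P.toFinset_parts_subset_Icc]
  simp only [smul_eq_mul, mul_comm]

end Nat.Partition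

namespace Cayley

variable {K : Type*} [Field K] (x : K)

def partWeight (i m : ℕ) : K := ((i : K) ^ m * m.factorial * (1 - x ^ i) ^ m)⁻¹

def multisetWeight (s : Multiset ℕ) : K := ∏ i ∈ s.toFinset, partWeight x i (s.count i)

def weightSum (n : ℕ) : K := ∑ P : n.Partition, multisetWeight x P.parts

/-- `(x;x)ₙ` in q-series notation. -/
def qPochhammer (n : ℕ) : K := ∏ j ∈ Icc 1 n, (1 - x ^ j)

@[simp]
theorem partWeight_zero (i : ℕ) : partWeight x i 0 = 1 := by simp [partWeight]

theorem partWeight_succ [CharZero K] {i : ℕ} (hi : i ≠ 0) (m : ℕ) :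
    (i : K) * (m + 1 : ℕ) * partWeight x i (m + 1) = (1 - x ^ i)⁻¹ * partWeight x i m := by
  have hne : (i : K) * (m + 1 : ℕ) ≠ 0 :=
    mul_ne_zero (Nat.cast_ne_zero.mpr hi) (Nat.cast_ne_zero.mpr m.succ_ne_zero)
  have hsucc : partWeight x i (m + 1)
      = ((i : K) * (m + 1 : ℕ))⁻¹ * ((1 - x ^ i)⁻¹ * partWeight x i m) := by
    simp only [partWeight, ← mul_inv]
    push_cast [pow_succ, Nat.factorial_succ]
    ring
  rw [hsucc, ← mul_assoc, mul_inv_cancel₀ hne, one_mul]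

theorem multisetWeight_eq_prod_of_subset {s : Multiset ℕ} {A : Finset ℕ} (hA : s.toFinset ⊆ A) :
    multisetWeight x s = ∏ i ∈ A, partWeight x i (s.count i) :=
  prod_subset hA fun i _ hi => by
    rw [Multiset.count_eq_zero_of_notMem (by simpa using hi), partWeight_zero]

theorem mul_count_mul_multisetWeight_cons [CharZero K] {i : ℕ} (hi : i ≠ 0) (s : Multiset ℕ) :
    (i : K) * ((i ::ₘ s).count i : ℕ) * multisetWeight x (i ::ₘ s)
      = (1 - x ^ i)⁻¹ * multisetWeight x s := by
  have hsub : s.toFinset ⊆ insert i s.toFinset := subset_insert _ _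
  have hmem : i ∈ insert i s.toFinset := mem_insert_self _ _
  have herase : ∀ j ∈ (insert i s.toFinset).erase i,
      partWeight x j ((i ::ₘ s).count j) = partWeight x j (s.count j) := fun j hj => by
    rw [Multiset.count_cons_of_ne (ne_of_mem_erase hj)]
  rw [multisetWeight_eq_prod_of_subset x (A := insert i s.toFinset) (by simp),
    multisetWeight_eq_prod_of_subset x hsub,
    ← mul_prod_erase _ _ hmem, ← mul_prod_erase _ _ hmem, prod_congr rfl herase,
    Multiset.count_cons_self, ← mul_assoc, partWeight_succ x hi, mul_assoc]

theorem sum_mul_count_mul_multisetWeight [CharZero K] {n i : ℕ} (hi : 1 ≤ i) (hin : i ≤ n) :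
    ∑ P : n.Partition, (i : K) * (P.parts.count i : ℕ) * multisetWeight x P.parts
      = (1 - x ^ i)⁻¹ * weightSum x (n - i) := by
  rw [weightSum, mul_sum, ← sum_filter_of_ne (p := fun P : n.Partition => i ∈ P.parts)
      fun P _ hP => by_contra fun hiP => hP (by rw [Multiset.count_eq_zero_of_notMem hiP]; simp),
    sum_subtype (p := fun P : n.Partition => i ∈ P.parts) _ (fun P => by simp),
    ← (Nat.Partition.partitionWithPartEquiv hi hin).symm.sum_comp]
  refine sum_congr rfl fun Q _ => ?_
  rw [Nat.Partition.partitionWithPartEquiv_symm_apply_parts]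
  exact mul_count_mul_multisetWeight_cons x (by omega) Q.parts

theorem nat_mul_weightSum [CharZero K] (n : ℕ) :
    (n : K) * weightSum x n = ∑ k ∈ range n, (1 - x ^ (n - k))⁻¹ * weightSum x k := by
  have hcount : ∀ P : n.Partition,
      (n : K) * multisetWeight x P.parts
        = ∑ i ∈ Icc 1 n, (i : K) * (P.parts.count i : ℕ) * multisetWeight x P.parts := fun P => by
    rw [← sum_mul]
    exact_mod_cast
      congrArg (fun m : ℕ => (m : K) * multisetWeight x P.parts) P.sum_mul_count_parts.symm
  calc (n : K) * weightSum x n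
      = ∑ i ∈ Icc 1 n, ∑ P : n.Partition,
          (i : K) * (P.parts.count i : ℕ) * multisetWeight x P.parts := by
        rw [weightSum, mul_sum, sum_congr rfl fun P _ => hcount P, sum_comm]
    _ = ∑ i ∈ Icc 1 n, (1 - x ^ i)⁻¹ * weightSum x (n - i) := sum_congr rfl fun i hi =>
        sum_mul_count_mul_multisetWeight x (mem_Icc.mp hi).1 (mem_Icc.mp hi).2
    _ = ∑ k ∈ range n, (1 - x ^ (n - k))⁻¹ * weightSum x k := by
        refine sum_nbij' (n - ·) (n - ·) ?_ ?_ ?_ ?_ ?_ <;> intro i hi <;> simp at hi ⊢ <;> grind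

@[simp]
theorem weightSum_zero : weightSum x 0 = 1 := by
  simp [weightSum, multisetWeight]

@[simp]
theorem qPochhammer_zero : qPochhammer x 0 = 1 := by simp [qPochhammer]

theorem qPochhammer_succ (n : ℕ) : qPochhammer x (n + 1) = qPochhammer x n * (1 - x ^ (n + 1)) :=
  prod_Icc_succ_top (by omega) _

theorem one_sub_pow_mul_inv_qPochhammer_succ {m : ℕ} (hx : x ^ (m + 1) ≠ 1) :
    (1 - x ^ (m + 1)) * (qPochhammer x (m + 1))⁻¹ = (qPochhammer x m)⁻¹ := by
  rw [qPochhammer_succ, mul_inv, mul_left_comm, mul_inv_cancel₀ (sub_ne_zero.mpr hx.symm), mul_one]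

theorem nat_mul_inv_qPochhammer (hx : ∀ i, 0 < i → x ^ i ≠ 1) (n : ℕ) :
    (n : K) * (qPochhammer x n)⁻¹
      = ∑ k ∈ range n, (1 - x ^ (n - k))⁻¹ * (qPochhammer x k)⁻¹ := by
  have ha : ∀ i, 0 < i → 1 - x ^ i ≠ 0 := fun i hi => sub_ne_zero.mpr (hx i hi).symm
  have hsucc m := one_sub_pow_mul_inv_qPochhammer_succ x (hx (m + 1) m.succ_pos)
  induction n with
  | zero => simp
  | succ n ih =>
    have hsplit : ∀ k ∈ range (n + 1),
        (1 - x ^ (n + 1)) * ((1 - x ^ (n + 1 - k))⁻¹ * (qPochhammer x k)⁻¹)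
          = (qPochhammer x k)⁻¹
            + x ^ (n + 1 - k) * (1 - x ^ (n + 1 - k))⁻¹ * ((1 - x ^ k) * (qPochhammer x k)⁻¹) := by
      intro k hk
      have hk' : 0 < n + 1 - k := by have := mem_range.mp hk; omega
      have hpow : 1 - x ^ (n + 1) = (1 - x ^ (n + 1 - k)) + x ^ (n + 1 - k) * (1 - x ^ k) := by
        conv_lhs => rw [← Nat.sub_add_cancel (mem_range.mp hk).le]
        ring
      rw [hpow]
      field_simp [ha _ hk']
    have hshift : ∑ k ∈ range (n + 1),
        x ^ (n + 1 - k) * (1 - x ^ (n + 1 - k))⁻¹ * ((1 - x ^ k) * (qPochhammer x k)⁻¹)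
          = (n : K) * (qPochhammer x n)⁻¹ - ∑ k ∈ range n, (qPochhammer x k)⁻¹ := by
      rw [sum_range_succ', ih, ← sum_sub_distrib]
      simp only [pow_zero, sub_self, zero_mul, mul_zero, add_zero, hsucc]
      refine sum_congr rfl fun k hk => ?_
      have hk' : 0 < n - k := by have := mem_range.mp hk; omega
      rw [show n + 1 - (k + 1) = n - k by omega]
      field_simp [ha _ hk']
      ring
    refine mul_left_cancel₀ (ha (n + 1) n.succ_pos) ?_
    calc (1 - x ^ (n + 1)) * ((n + 1 : ℕ) * (qPochhammer x (n + 1))⁻¹)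
        = (n + 1) * (qPochhammer x n)⁻¹ := by rw [mul_left_comm, hsucc]; push_cast; ring
      _ = ∑ k ∈ range (n + 1), (qPochhammer x k)⁻¹
            + ((n : K) * (qPochhammer x n)⁻¹ - ∑ k ∈ range n, (qPochhammer x k)⁻¹) := by
        rw [sum_range_succ]; ring
      _ = _ := by rw [mul_sum, ← hshift, ← sum_add_distrib, sum_congr rfl hsplit]

theorem eq_of_nat_mul_eq_sum [CharZero K] {c u v : ℕ → K} (h0 : u 0 = v 0)
    (hu : ∀ n : ℕ, (n : K) * u n = ∑ k ∈ range n, c (n - k) * u k)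
    (hv : ∀ n : ℕ, (n : K) * v n = ∑ k ∈ range n, c (n - k) * v k) : u = v := by
  funext n
  induction n using Nat.strong_induction_on with
  | _ n ih =>
    rcases n.eq_zero_or_pos with rfl | hn
    · exact h0
    · refine mul_left_cancel₀ (Nat.cast_ne_zero.mpr hn.ne') ?_
      rw [hu, hv]
      exact sum_congr rfl fun k hk => by rw [ih k (mem_range.mp hk)]

theorem weightSum_eq_inv_qPochhammer [CharZero K] (hx : ∀ i, 0 < i → x ^ i ≠ 1) :
    weightSum x = fun n => (qPochhammer x n)⁻¹ :=
  eq_of_nat_mul_eq_sum (c := fun i => (1 - x ^ i)⁻¹) (by simp) (nat_mul_weightSum x)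
    (nat_mul_inv_qPochhammer x hx)

end Cayley

theorem cayley_identity_general (x : ℝ) (hx0 : 0 < x) (hx1 : x < 1) (n : ℕ) :
    ∑ P : Nat.Partition n,
        (∏ j ∈ Icc 1 n, (1 - x ^ j)) /
          (∏ i ∈ Icc 1 n,
            ((i : ℝ) ^ (P.parts.count i) * (Nat.factorial (P.parts.count i) : ℝ) *
              (1 - x ^ i) ^ (P.parts.count i)))
      = 1 := by
  have hx : ∀ i, 0 < i → x ^ i ≠ 1 := fun i hi => (pow_lt_one₀ hx0.le hx1 hi.ne').ne
  have hq : Cayley.qPochhammer x n ≠ 0 :=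
    prod_ne_zero_iff.mpr fun j hj => sub_ne_zero.mpr (hx j (mem_Icc.mp hj).1).symm
  calc _ = ∑ P : n.Partition, Cayley.qPochhammer x n * Cayley.multisetWeight x P.parts :=
        sum_congr rfl fun P _ => by
          rw [Cayley.multisetWeight_eq_prod_of_subset x P.toFinset_parts_subset_Icc, div_eq_mul_inv,
            ← prod_inv_distrib]
          rfl
    _ = 1 := by
      rw [← mul_sum, ← Cayley.weightSum, Cayley.weightSum_eq_inv_qPochhammer x hx,
        mul_inv_cancel₀ hq]

/-- Cayley's identity: for `0 < x < 1`,
`∑_{λ ⊢ n} ∏_{j=1}^n (1 - x^j) / ∏_i i^{mᵢ} mᵢ! (1 - x^i)^{mᵢ} = 1`. -/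
theorem cayley_identity (x : ℝ) (hx0 : 0 < x) (hx1 : x < 1) (n : ℕ) (hn : 1 ≤ n) :
    ∑ P : Nat.Partition n,
        (∏ j ∈ Icc 1 n, (1 - x ^ j)) /
          (∏ i ∈ Icc 1 n,
            ((i : ℝ) ^ (P.parts.count i) * (Nat.factorial (P.parts.count i) : ℝ) *
              (1 - x ^ i) ^ (P.parts.count i)))
      = 1 :=
  cayley_identity_general x hx0 hx1 n
end

section
/- Let q ≥ 2 be an integer (e.g. a prime power) and n ≥ 2. Then ∑_{λ ⊢ n} (m₁(λ)(m₁(λ)−1)/2 − m₂(λ)) · |GL_n(q)| / w_q(λ) = q^{n²−n} · (1/q) · (1 − 1/q^{n−1})(1 − 1/q^n) / ((1 − 1/q)(1 − 1/q²)), as an identity in ℚ. (Equivalently, for a uniformly random F-stable maximal torus of GL_n(F̄_q), the expected number of reducible dimension-two subtori minus the expected number of irreducible dimension-two subtori equals (1/q)(1 − q^{1−n})(1 − q^{−n})/((1 − 1/q)(1 − 1/q²)).) -/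
/-!
Removing one part `i` from a partition `λ` divides `w_q(λ)` by `i m_i(λ) (q^i - 1)`, and the
partitions of `n` having a part `i` correspond to the partitions of `n - i`. Hence
`∑_{λ ⊢ n} m_i(λ) / w_q(λ) = S(n - i) / (i (q^i - 1))` with `S(m) = ∑_{μ ⊢ m} 1 / w_q(μ)`.
Weighting by `∑_i i m_i(λ) = n` gives `n S(n) = ∑_{i=1}^n S(n - i) / (q^i - 1)`, which is solved by
`S(m) = q^{-m} / ∏_{j=1}^m (1 - q^{-j})`, i.e. `|GL_m(q)| S(m) = q^{m² - m}`. Removing parts twice,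
`∑_{λ ⊢ n} (m₁(m₁-1)/2 - m₂) / w_q(λ) = S(n-2) (1 / (2(q-1)²) - 1 / (2(q²-1)))
  = S(n-2) / ((q-1)(q²-1))`.
-/

open Finset

namespace Nat.Partition

theorem sum_range_succ_mul_count_parts {n : ℕ} (P : n.Partition) :
    ∑ k ∈ range n, (k + 1) * P.parts.count (k + 1) = n := by
  rw [range_eq_Ico, sum_Ico_add' fun i ↦ i * P.parts.count i, zero_add,
    Ico_add_one_right_eq_Icc]
  simpa [P.parts_sum, mul_comm] using
    (sum_multiset_count_of_subset P.parts _ P.toFinset_parts_subset_Icc).symm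

theorem sum_eq_sum_cons {M : Type*} [AddCommMonoid M] {n a : ℕ} (ha1 : 1 ≤ a) (ha : a ≤ n)
    (F : Multiset ℕ → M) (hF : ∀ s, a ∉ s → F s = 0) :
    ∑ P : n.Partition, F P.parts = ∑ Q : (n - a).Partition, F (a ::ₘ Q.parts) := by
  rw [← sum_filter_of_ne fun P _ h ↦ by_contra fun hP ↦ h (hF _ hP),
    sum_subtype {P : n.Partition | a ∈ P.parts} (p := fun P ↦ a ∈ P.parts) (by simp)
      fun P ↦ F P.parts,
    ← (partitionWithPartEquiv ha1 ha).symm.sum_comp]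
  simp

end Nat.Partition

variable {K : Type*}

section CommRing

variable [CommRing K]

/-- `w_q(λ)` is the order of `N(T)^F` for an `F`-stable maximal torus `T` of type `λ`. -/
def torusWeight (q : K) (s : Multiset ℕ) : K :=
  ∏ i ∈ s.toFinset, ((i : K) ^ s.count i * (s.count i).factorial * (q ^ i - 1) ^ s.count i)

theorem torusWeight_eq_prod_of_subset (q : K) {s : Multiset ℕ} {S : Finset ℕ}
    (hS : s.toFinset ⊆ S) :
    torusWeight q s =
      ∏ i ∈ S, ((i : K) ^ s.count i * (s.count i).factorial * (q ^ i - 1) ^ s.count i) :=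
  prod_subset hS fun i _ hi ↦ by
    simp [Multiset.count_eq_zero.2 fun h ↦ hi (Multiset.mem_toFinset.2 h)]

theorem torusWeight_parts (q : K) {n : ℕ} (P : n.Partition) :
    torusWeight q P.parts =
      ∏ i ∈ Icc 1 n,
        ((i : K) ^ P.parts.count i * (P.parts.count i).factorial * (q ^ i - 1) ^ P.parts.count i) :=
  torusWeight_eq_prod_of_subset q P.toFinset_parts_subset_Icc

theorem torusWeight_cons (q : K) (i : ℕ) (s : Multiset ℕ) :
    torusWeight q (i ::ₘ s) = i * (s.count i + 1) * (q ^ i - 1) * torusWeight q s := by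
  have hS : s.toFinset ⊆ insert i s.toFinset := subset_insert _ _
  have hi : i ∈ insert i s.toFinset := mem_insert_self _ _
  rw [torusWeight_eq_prod_of_subset q (Multiset.toFinset_cons i s).le,
    torusWeight_eq_prod_of_subset q hS, ← mul_prod_erase _ _ hi, ← mul_prod_erase _ _ hi,
    prod_congr rfl fun j hj ↦ by rw [Multiset.count_cons_of_ne (ne_of_mem_erase hj)],
    Multiset.count_cons_self, Nat.factorial_succ]
  push_cast
  ring

/-- A `q`-analogue of `Nat.descFactorial`; `qDescFactorial u m m` is the `q`-Pochhammer symbol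
`(u; u)_m`. -/
def qDescFactorial (u : K) (m k : ℕ) : K := ∏ j ∈ range k, (1 - u ^ (m - j))

theorem qDescFactorial_succ_right (u : K) (m k : ℕ) :
    qDescFactorial u m (k + 1) = qDescFactorial u m k * (1 - u ^ (m - k)) :=
  prod_range_succ _ _

theorem qDescFactorial_succ_succ (u : K) (m k : ℕ) :
    qDescFactorial u (m + 1) (k + 1) = (1 - u ^ (m + 1)) * qDescFactorial u m k := by
  simp only [qDescFactorial, prod_range_succ', Nat.sub_zero, Nat.add_sub_add_right]
  ring

theorem qDescFactorial_of_lt (u : K) {m k : ℕ} (h : m < k) : qDescFactorial u m k = 0 :=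
  prod_eq_zero (mem_range.2 h) (by simp)

theorem qDescFactorial_self_eq_mul (u : K) {m k : ℕ} (h : k ≤ m) :
    qDescFactorial u m m = qDescFactorial u m k * qDescFactorial u (m - k) (m - k) := by
  obtain ⟨l, rfl⟩ := Nat.exists_eq_add_of_le h
  simp only [qDescFactorial, prod_range_add, Nat.add_sub_cancel_left, Nat.add_sub_add_left]

end CommRing

section Field

variable [Field K]

theorem qDescFactorial_ne_zero {u : K} (hu : ∀ j, 0 < j → u ^ j ≠ 1) {m k : ℕ} (h : k ≤ m) :
    qDescFactorial u m k ≠ 0 :=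
  prod_ne_zero_iff.2 fun j hj ↦ sub_ne_zero.2 (hu _ (by grind)).symm

theorem qDescFactorial_succ_succ_div {u : K} (hu : ∀ j, 0 < j → u ^ j ≠ 1) {m k : ℕ}
    (h : k ≤ m) :
    qDescFactorial u (m + 1) (k + 1) / (1 - u ^ (k + 1)) =
      qDescFactorial u m k - qDescFactorial u m (k + 1) +
        qDescFactorial u m (k + 1) / (1 - u ^ (k + 1)) := by
  have hk : 1 - u ^ (k + 1) ≠ 0 := sub_ne_zero.2 (hu _ k.succ_pos).symm
  have hpow : u ^ (m + 1) = u ^ (m - k) * u ^ (k + 1) := by rw [← pow_add]; congr 1; omega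
  rw [qDescFactorial_succ_succ, qDescFactorial_succ_right, hpow]
  field_simp
  ring

theorem sum_qDescFactorial_div {u : K} (hu : ∀ j, 0 < j → u ^ j ≠ 1) (m : ℕ) :
    ∑ k ∈ range m, qDescFactorial u m (k + 1) / (1 - u ^ (k + 1)) = m := by
  induction m with
  | zero => simp
  | succ m ih =>
    rw [sum_congr rfl fun k hk ↦
        qDescFactorial_succ_succ_div hu (Nat.lt_succ_iff.1 (mem_range.1 hk)),
      sum_add_distrib, sum_range_sub', sum_range_succ, ih, qDescFactorial_of_lt u m.lt_succ_self,
      qDescFactorial, prod_range_zero, Nat.cast_succ]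
    ring

theorem prod_range_pow_sub_pow {q : K} (hq : q ≠ 0) (n : ℕ) :
    ∏ i ∈ range n, (q ^ n - q ^ i) = q ^ (n * n) * qDescFactorial q⁻¹ n n := by
  have hqn : q ^ (n * n) = ∏ _i ∈ range n, q ^ n := by rw [prod_const, card_range, ← pow_mul]
  rw [hqn, qDescFactorial, ← prod_mul_distrib]
  refine prod_congr rfl fun i hi ↦ ?_
  rw [mul_sub, mul_one, inv_pow, ← pow_sub₀ q hq (n.sub_le i),
    Nat.sub_sub_self (mem_range.1 hi).le]

def torusWeightSum (q : K) (m : ℕ) : K := ∑ P : m.Partition, (torusWeight q P.parts)⁻¹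

variable [CharZero K]

theorem sum_count_mul_div_torusWeight (q : K) {i m : ℕ} (hi : 1 ≤ i) (him : i ≤ m)
    (g : K → K) :
    ∑ P : m.Partition,
        (P.parts.count i : K) * g ((P.parts.count i : K) - 1) / torusWeight q P.parts =
      ∑ Q : (m - i).Partition, g (Q.parts.count i) / (i * (q ^ i - 1) * torusWeight q Q.parts) := by
  rw [Nat.Partition.sum_eq_sum_cons hi him
    (fun s ↦ (s.count i : K) * g ((s.count i : K) - 1) / torusWeight q s)
    fun s hs ↦ by simp [Multiset.count_eq_zero.2 hs]]
  refine sum_congr rfl fun Q _ ↦ ?_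
  rw [Multiset.count_cons_self, torusWeight_cons, Nat.cast_succ, add_sub_cancel_right,
    mul_comm (i : K), mul_assoc, mul_assoc, mul_div_mul_left _ _ (Nat.cast_add_one_ne_zero _),
    mul_assoc]

theorem sum_count_div_torusWeight (q : K) {i m : ℕ} (hi : 1 ≤ i) (him : i ≤ m) :
    ∑ P : m.Partition, (P.parts.count i : K) / torusWeight q P.parts =
      torusWeightSum q (m - i) / (i * (q ^ i - 1)) := by
  have h := sum_count_mul_div_torusWeight q hi him fun _ ↦ 1
  simp only [mul_one] at h
  rw [h, torusWeightSum, sum_div]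
  exact sum_congr rfl fun Q _ ↦ by rw [one_div, mul_inv, div_eq_inv_mul]

theorem natCast_mul_torusWeightSum (q : K) (m : ℕ) :
    m * torusWeightSum q m =
      ∑ k ∈ range m, torusWeightSum q (m - (k + 1)) / (q ^ (k + 1) - 1) := by
  calc (m : K) * torusWeightSum q m
      = ∑ P : m.Partition, ∑ k ∈ range m,
          ((k + 1 : ℕ) : K) * (P.parts.count (k + 1) / torusWeight q P.parts) := by
        rw [torusWeightSum, mul_sum]
        refine sum_congr rfl fun P _ ↦ ?_
        have hm : (m : K) = ∑ k ∈ range m, ((k + 1 : ℕ) : K) * P.parts.count (k + 1) := by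
          exact_mod_cast P.sum_range_succ_mul_count_parts.symm
        simp_rw [← mul_div_assoc, ← sum_div, ← div_eq_mul_inv, ← hm]
    _ = ∑ k ∈ range m, torusWeightSum q (m - (k + 1)) / (q ^ (k + 1) - 1) := by
        rw [sum_comm]
        refine sum_congr rfl fun k hk ↦ ?_
        rw [← mul_sum, sum_count_div_torusWeight q k.succ_pos (mem_range.1 hk),
          ← mul_div_assoc, mul_div_mul_left _ _ (Nat.cast_ne_zero.2 k.succ_ne_zero)]

theorem torusWeightSum_eq {q : K} (hq0 : q ≠ 0) (hq : ∀ j, 0 < j → q ^ j ≠ 1) (m : ℕ) :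
    torusWeightSum q m = q⁻¹ ^ m / qDescFactorial q⁻¹ m m := by
  have hu : ∀ j, 0 < j → q⁻¹ ^ j ≠ 1 := fun j hj ↦ by rw [inv_pow, inv_ne_one]; exact hq j hj
  induction m using Nat.strong_induction_on with
  | _ m ih =>
    rcases m.eq_zero_or_pos with rfl | hm
    · simp [torusWeightSum, torusWeight, qDescFactorial]
    refine mul_left_cancel₀ (Nat.cast_ne_zero.2 hm.ne') ?_
    conv_rhs => rw [← sum_qDescFactorial_div hu m, sum_mul]
    rw [natCast_mul_torusWeightSum]
    refine sum_congr rfl fun k hk ↦ ?_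
    have hkm : k + 1 ≤ m := mem_range.1 hk
    have hqk : q ^ (k + 1) - 1 = (1 - q⁻¹ ^ (k + 1)) / q⁻¹ ^ (k + 1) := by
      rw [eq_div_iff (pow_ne_zero _ (inv_ne_zero hq0)), sub_mul, ← mul_pow, mul_inv_cancel₀ hq0,
        one_pow, one_mul]
    have hpow : q⁻¹ ^ m = q⁻¹ ^ (m - (k + 1)) * q⁻¹ ^ (k + 1) := by
      rw [← pow_add, Nat.sub_add_cancel hkm]
    have h₁ := qDescFactorial_ne_zero hu hkm
    have h₂ := qDescFactorial_ne_zero hu (le_refl (m - (k + 1)))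
    have h₃ : 1 - q⁻¹ ^ (k + 1) ≠ 0 := sub_ne_zero.2 (hu _ k.succ_pos).symm
    rw [ih _ (by omega), qDescFactorial_self_eq_mul q⁻¹ hkm, hqk, hpow]
    generalize q⁻¹ = u at *
    field_simp

theorem prod_range_pow_sub_pow_mul_torusWeightSum {q : K} (hq0 : q ≠ 0)
    (hq : ∀ j, 0 < j → q ^ j ≠ 1) (m k : ℕ) :
    (∏ i ∈ range (m + k), (q ^ (m + k) - q ^ i)) * torusWeightSum q m =
      q ^ ((m + k) * (m + k)) * q⁻¹ ^ m * qDescFactorial q⁻¹ (m + k) k := by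
  have hP : qDescFactorial q⁻¹ m m ≠ 0 :=
    qDescFactorial_ne_zero (fun j hj ↦ by rw [inv_pow, inv_ne_one]; exact hq j hj) le_rfl
  rw [prod_range_pow_sub_pow hq0, torusWeightSum_eq hq0 hq,
    qDescFactorial_self_eq_mul _ (k.le_add_left m), Nat.add_sub_cancel, mul_div_assoc',
    div_eq_iff hP]
  ring

theorem sum_choose_count_one_sub_count_two_div_torusWeight {q : K} (hq : q ^ 2 ≠ 1) (k : ℕ) :
    ∑ P : (k + 2).Partition,
        ((P.parts.count 1 : K) * ((P.parts.count 1 : K) - 1) / 2 - P.parts.count 2) /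
          torusWeight q P.parts =
      torusWeightSum q k / ((q - 1) * (q ^ 2 - 1)) := by
  have hq₁ : q - 1 ≠ 0 := sub_ne_zero.2 fun h ↦ hq (by rw [h, one_pow])
  have hq₂ : q ^ 2 - 1 ≠ 0 := sub_ne_zero.2 hq
  have h₁ := sum_count_mul_div_torusWeight q le_rfl (by omega : 1 ≤ k + 2) (· / 2)
  have h₂ := sum_count_div_torusWeight q (m := k + 1) le_rfl (by omega)
  have h₃ := sum_count_div_torusWeight q (by omega : 1 ≤ 2) (by omega : 2 ≤ k + 2)
  simp only [Nat.cast_one, one_mul, pow_one, Nat.add_sub_cancel] at h₁ h₂ h₃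
  have h₄ : ∑ Q : (k + 1).Partition,
      (Q.parts.count 1 : K) / 2 / ((q - 1) * torusWeight q Q.parts) =
        torusWeightSum q k / (q - 1) / (2 * (q - 1)) := by
    rw [← h₂, sum_div]
    refine sum_congr rfl fun Q _ ↦ ?_
    rw [div_div, div_div]
    ring
  simp only [← mul_div_assoc] at h₁
  simp only [sub_div, sum_sub_distrib]
  -- the right side of `h₁` sums over `(k + 2 - 1).Partition`
  rw [h₁, show k + 2 - 1 = k + 1 from rfl, h₄, h₃]
  field_simp
  ring

end Field

/-- The expected excess of reducible over irreducible dimension-two subtori of a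
uniformly random `F`-stable maximal torus of `GL_n(F̄_q)`:
`∑_{λ ⊢ n} (m₁(m₁-1)/2 - m₂) |GL_n(q)| / w_q(λ)
  = q^(n²-n) (1/q)(1-1/q^(n-1))(1-1/q^n)/((1-1/q)(1-1/q²))`. -/
theorem sum_tori_excess_dim_two (q : ℕ) (hq : 2 ≤ q) (n : ℕ) (hn : 2 ≤ n) :
    ∑ P : Nat.Partition n,
        ((P.parts.count 1 : ℚ) * ((P.parts.count 1 : ℚ) - 1) / 2
            - (P.parts.count 2 : ℚ)) *
          ((∏ i ∈ range n, ((q : ℚ) ^ n - (q : ℚ) ^ i)) /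
            (∏ i ∈ Icc 1 n,
              ((i : ℚ) ^ (P.parts.count i) * (Nat.factorial (P.parts.count i) : ℚ) *
                ((q : ℚ) ^ i - 1) ^ (P.parts.count i))))
      = (q : ℚ) ^ (n ^ 2 - n) *
          ((1 / (q : ℚ)) * (1 - 1 / (q : ℚ) ^ (n - 1)) * (1 - 1 / (q : ℚ) ^ n)
            / ((1 - 1 / (q : ℚ)) * (1 - 1 / (q : ℚ) ^ 2))) := by
  obtain ⟨k, rfl⟩ : ∃ k, n = k + 2 := ⟨n - 2, by omega⟩
  have hq0 : (q : ℚ) ≠ 0 := by positivity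
  have hq1 : ∀ j, 0 < j → (q : ℚ) ^ j ≠ 1 := fun j hj ↦
    (one_lt_pow₀ (by exact_mod_cast hq) hj.ne').ne'
  simp_rw [← torusWeight_parts,
    mul_div_left_comm _ (∏ i ∈ range (k + 2), ((q : ℚ) ^ (k + 2) - (q : ℚ) ^ i))]
  rw [← mul_sum,
    sum_choose_count_one_sub_count_two_div_torusWeight (hq1 2 two_pos), ← mul_div_assoc,
    prod_range_pow_sub_pow_mul_torusWeightSum hq0 hq1 k 2]
  have hq₁ : (q : ℚ) - 1 ≠ 0 := sub_ne_zero.2 (by simpa using hq1 1 one_pos)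
  have hq₂ : (q : ℚ) ^ 2 - 1 ≠ 0 := sub_ne_zero.2 (hq1 2 two_pos)
  rw [show (k + 2) ^ 2 - (k + 2) = k * k + 3 * k + 2 by ring_nf; omega,
    show (k + 2) * (k + 2) = k * k + 3 * k + 2 + k + 2 by ring]
  simp only [qDescFactorial, prod_range_succ, prod_range_zero, Nat.sub_zero,
    show k + 2 - 1 = k + 1 from rfl, inv_pow, one_div, pow_add]
  field_simp
end

section
/- Let q ≥ 2 be an integer (e.g. a prime power) and n ≥ 1. Then ∑_{λ ⊢ n} (−1)^{n − ℓ(λ)} · |GL_n(q)| / w_q(λ) = q^{n(n−1)/2}, as an identity in ℚ, where ℓ(λ) is the number of parts of λ. (Since |GL_n(q)|/w_q(λ) is the number of F-stable maximal tori of GL_n(F̄_q) of type λ and ℓ(λ) is the number of irreducible factors of such a torus, this says the number of F-stable maximal tori whose number of irreducible factors is ≡ n mod 2, minus the number whose number of irreducible factors is ≢ n mod 2, equals q^{(n²−n)/2}, the square root of the total number of tori.) -/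
open Finset

/-!
Put `c_i = (-1)^(i-1) / (i (q^i - 1))`. Since `n - ℓ(λ) = ∑ (i - 1) m_i` and
`|GL_n(q)| = q^(n(n-1)/2) ∏_{j ≤ n} (q^j - 1)`, the claim says that
`T_n = ∑_{λ ⊢ n} ∏ c_i^{m_i} / m_i!` equals `a_n = 1 / ∏_{j ≤ n} (q^j - 1)`.

Removing one part of size `i` from `λ` gives the exponential-formula recurrence
`n T_n = ∑_i i c_i T_{n-i}`, which determines `T` from `T_0 = 1`. The sequence `a` satisfies the
same recurrence: for `s_n = ∑_i i c_i a_{n-i}`, splitting `q^n = q^i q^(n-i)` and using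
`(q^j - 1) a_j = a_{j-1}` and `(q^i - 1) i c_i = (-1)^(i-1)` gives
`(q^n - 1) s_n = s_{n-1} + a_{n-1}`, hence `s_n = n a_n` by induction.
-/

@[to_additive]
theorem prod_count_eq_of_toFinset_subset {α M : Type*} [DecidableEq α] [CommMonoid M]
    (f : α → ℕ → M) (hf : ∀ i, f i 0 = 1) {s : Multiset α} {S : Finset α} (h : s.toFinset ⊆ S) :
    ∏ i ∈ S, f i (s.count i) = ∏ i ∈ s.toFinset, f i (s.count i) :=
  (prod_subset h fun i _ hi => by rw [Multiset.count_eq_zero.2 (by simpa using hi), hf]).symm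

theorem Nat.Partition.sum_range_mul_count {n : ℕ} (P : n.Partition) :
    ∑ i ∈ range (n + 1), i * P.parts.count i = n := by
  have hsub : P.parts.toFinset ⊆ range (n + 1) := fun i hi =>
    mem_range_succ_iff.2 (P.le_of_mem_parts (Multiset.mem_toFinset.1 hi))
  rw [sum_count_eq_of_toFinset_subset (fun i m => i * m) (by simp) hsub]
  simpa [mul_comm] using (sum_multiset_count P.parts).symm.trans P.parts_sum

theorem Nat.Partition.pow_sub_card_parts {M : Type*} [CommMonoid M] (x : M) {n : ℕ}
    (P : n.Partition) :
    x ^ (n - Multiset.card P.parts) = ∏ i ∈ P.parts.toFinset, (x ^ (i - 1)) ^ P.parts.count i := by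
  simp_rw [← pow_mul, prod_pow_eq_pow_sum]
  congr 1
  have hsum : ∑ i ∈ P.parts.toFinset, P.parts.count i * i = n := by
    simpa using (sum_multiset_count P.parts).symm.trans P.parts_sum
  have hcard : ∑ i ∈ P.parts.toFinset, (i - 1) * P.parts.count i + Multiset.card P.parts
      = ∑ i ∈ P.parts.toFinset, P.parts.count i * i := by
    rw [← Multiset.toFinset_sum_count_eq, ← sum_add_distrib]
    refine sum_congr rfl fun i hi => ?_
    rw [mul_comm, ← Nat.mul_succ, Nat.succ_eq_add_one,
      Nat.sub_add_cancel (P.parts_pos (Multiset.mem_toFinset.1 hi))]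
  omega

theorem prod_range_pow_sub_pow_s15 {R : Type*} [CommRing R] (q : R) (n : ℕ) :
    ∏ i ∈ range n, (q ^ n - q ^ i) = q ^ (n * (n - 1) / 2) * ∏ j ∈ range n, (q ^ (j + 1) - 1) := by
  have h (i : ℕ) (hi : i ∈ range n) : q ^ n - q ^ i = q ^ i * (q ^ (n - 1 - i + 1) - 1) := by
    rw [mul_sub, mul_one, ← pow_add, show i + (n - 1 - i + 1) = n by have := mem_range.1 hi; omega]
  rw [prod_congr rfl h, prod_mul_distrib, prod_pow_eq_pow_sum, sum_range_id,
    prod_range_reflect (fun j => q ^ (j + 1) - 1)]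

theorem sub_one_mul_convolution_succ {R : Type*} [CommRing R] {q : R} {a d : ℕ → R}
    (ha : ∀ j, (q ^ (j + 1) - 1) * a (j + 1) = a j)
    (hd : ∀ i, (q ^ (i + 1) - 1) * d (i + 1) = (-1) ^ i) (n : ℕ) :
    (q ^ (n + 1) - 1) * ∑ i ∈ range (n + 2), d i * a (n + 1 - i)
      = ∑ i ∈ range (n + 1), d i * a (n - i) + a n := by
  set b : ℕ → R := fun j => (q ^ j - 1) * a j
  set e : ℕ → R := fun i => (q ^ i - 1) * d i
  have split : ∀ i ∈ range (n + 2), (q ^ (n + 1) - 1) * (d i * a (n + 1 - i))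
      = d i * b (n + 1 - i) + e i * a (n + 1 - i) + e i * b (n + 1 - i) := by
    intro i hi
    rw [show n + 1 = i + (n + 1 - i) by have := mem_range.1 hi; omega]
    simp only [b, e, pow_add, Nat.add_sub_cancel_left]
    ring
  have shift (f : ℕ → R) :
      ∑ i ∈ range (n + 2), f i * b (n + 1 - i) = ∑ i ∈ range (n + 1), f i * a (n - i) := by
    rw [sum_range_succ]
    simp only [b, Nat.sub_self, pow_zero, sub_self, zero_mul, mul_zero, add_zero]
    refine sum_congr rfl fun i hi => ?_
    rw [show n + 1 - i = n - i + 1 by have := mem_range.1 hi; omega, ha]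
  have he0 : e 0 = 0 := by simp [e]
  have signs : ∑ i ∈ range (n + 2), e i * a (n + 1 - i) + ∑ i ∈ range (n + 1), e i * a (n - i)
      = a n := by
    rw [sum_range_succ', sum_range_succ', sum_range_succ' _ n]
    simp only [e, he0, hd, zero_mul, add_zero, Nat.add_sub_add_right, pow_zero, one_mul,
      Nat.sub_zero, pow_succ]
    rw [add_comm, ← add_assoc, ← sum_add_distrib]
    simp
  rw [mul_sum, sum_congr rfl split, sum_add_distrib, sum_add_distrib, shift, shift, add_assoc,
    signs]

section
variable {K : Type*} [Field K]

open Nat in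
def expWeight (c : ℕ → K) (s : Multiset ℕ) : K :=
  ∏ i ∈ s.toFinset, c i ^ s.count i / (s.count i)!

open Nat in
theorem count_add_one_mul_expWeight_cons [CharZero K] (c : ℕ → K) (i : ℕ) (s : Multiset ℕ) :
    (s.count i + 1) * expWeight c (i ::ₘ s) = c i * expWeight c s := by
  have hsub : s.toFinset ⊆ (i ::ₘ s).toFinset := by simp [Finset.subset_insert]
  have hi : i ∈ (i ::ₘ s).toFinset := by simp
  rw [expWeight, expWeight, ← prod_count_eq_of_toFinset_subset (fun j m => c j ^ m / (m ! : K))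
      (by simp) hsub, ← mul_prod_erase _ _ hi,
    ← mul_prod_erase _ (fun j => c j ^ s.count j / ((s.count j)! : K)) hi,
    prod_congr rfl fun j hj => by rw [Multiset.count_cons_of_ne (ne_of_mem_erase hj)],
    Multiset.count_cons_self, Nat.factorial_succ]
  push_cast
  field_simp
  ring

def partitionExpSum (c : ℕ → K) (n : ℕ) : K :=
  ∑ P : n.Partition, expWeight c P.parts

theorem partitionExpSum_zero (c : ℕ → K) : partitionExpSum c 0 = 1 := by
  simp [partitionExpSum, expWeight]

theorem sum_count_mul_expWeight [CharZero K] (c : ℕ → K) {n i : ℕ} (hi : 1 ≤ i) (hin : i ≤ n) :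
    ∑ P : n.Partition, (P.parts.count i : K) * expWeight c P.parts
      = c i * partitionExpSum c (n - i) := by
  let e := Nat.Partition.partitionWithPartEquiv hi hin
  rw [← sum_filter_of_ne (p := fun P : n.Partition => i ∈ P.parts) fun P _ hP => by
      by_contra h; simp [Multiset.count_eq_zero.2 h] at hP,
    sum_subtype _ (p := fun P : n.Partition => i ∈ P.parts) (fun P => by simp),
    ← e.symm.sum_comp, partitionExpSum, mul_sum]
  refine sum_congr rfl fun μ _ => ?_
  simp only [e, Nat.Partition.partitionWithPartEquiv_symm_apply_parts, Multiset.count_cons_self]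
  push_cast
  exact count_add_one_mul_expWeight_cons c i μ.parts

theorem mul_partitionExpSum [CharZero K] (c : ℕ → K) (n : ℕ) :
    (n : K) * partitionExpSum c n = ∑ i ∈ range (n + 1), i * c i * partitionExpSum c (n - i) := by
  have hn (P : n.Partition) : (n : K) = ∑ i ∈ range (n + 1), (i : K) * P.parts.count i := by
    exact_mod_cast P.sum_range_mul_count.symm
  calc (n : K) * partitionExpSum c n
      = ∑ i ∈ range (n + 1), (i : K) *
          ∑ P : n.Partition, (P.parts.count i : K) * expWeight c P.parts := by
        simp_rw [partitionExpSum, mul_sum, sum_comm (s := range (n + 1))]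
        refine sum_congr rfl fun P _ => ?_
        rw [hn P, sum_mul]
        exact sum_congr rfl fun i _ => mul_assoc _ _ _
    _ = _ := by
        refine sum_congr rfl fun i hi => ?_
        rcases Nat.eq_zero_or_pos i with rfl | hi0
        · simp
        · rw [sum_count_mul_expWeight c hi0 (by simpa [Nat.lt_succ_iff] using hi), mul_assoc]

theorem eq_of_mul_eq_sum_range [CharZero K] {d x y : ℕ → K} (h0 : x 0 = y 0)
    (hx : ∀ n : ℕ, (n : K) * x n = ∑ i ∈ range (n + 1), i * d i * x (n - i))
    (hy : ∀ n : ℕ, (n : K) * y n = ∑ i ∈ range (n + 1), i * d i * y (n - i)) : x = y := by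
  funext n
  induction n using Nat.strong_induction_on with
  | _ n ih =>
    rcases n with _ | n
    · exact h0
    · have hsum : ∑ i ∈ range (n + 2), i * d i * x (n + 1 - i)
          = ∑ i ∈ range (n + 2), i * d i * y (n + 1 - i) := by
        simp only [sum_range_succ' _ (n + 1), Nat.add_sub_add_right, Nat.cast_zero, zero_mul]
        congr 1
        exact sum_congr rfl fun i hi => by rw [ih (n - i) (by omega)]
      have h := (hx (n + 1)).trans (hsum.trans (hy (n + 1)).symm)
      exact mul_left_cancel₀ (Nat.cast_add_one_ne_zero n) (by exact_mod_cast h)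

def torusCoeff (q : K) (i : ℕ) : K := (-1) ^ (i - 1) / (i * (q ^ i - 1))

theorem mul_inv_prod_eq_sum [CharZero K] {q : K} (hq : ∀ j, q ^ (j + 1) ≠ 1) (n : ℕ) :
    (n : K) * (∏ j ∈ range n, (q ^ (j + 1) - 1))⁻¹
      = ∑ i ∈ range (n + 1), i * torusCoeff q i * (∏ j ∈ range (n - i), (q ^ (j + 1) - 1))⁻¹ := by
  have hq' (j : ℕ) : q ^ (j + 1) - 1 ≠ 0 := sub_ne_zero.2 (hq j)
  set a : ℕ → K := fun n => (∏ j ∈ range n, (q ^ (j + 1) - 1))⁻¹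
  have ha (j : ℕ) : (q ^ (j + 1) - 1) * a (j + 1) = a j := by
    simp only [a, prod_range_succ, mul_inv, mul_left_comm _ (a j), mul_inv_cancel₀ (hq' j), mul_one]
  have hd (i : ℕ) : (q ^ (i + 1) - 1) * ((i + 1 : ℕ) * torusCoeff q (i + 1)) = (-1) ^ i := by
    have := hq' i
    simp only [torusCoeff, Nat.add_sub_cancel]
    field_simp
  induction n with
  | zero => simp
  | succ n ih =>
    refine mul_left_cancel₀ (hq' n) ?_
    rw [sub_one_mul_convolution_succ ha hd n, ← ih, mul_left_comm, ha]
    push_cast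
    ring

theorem partitionExpSum_torusCoeff [CharZero K] {q : K} (hq : ∀ j, q ^ (j + 1) ≠ 1) (n : ℕ) :
    partitionExpSum (torusCoeff q) n = (∏ j ∈ range n, (q ^ (j + 1) - 1))⁻¹ :=
  congrFun (eq_of_mul_eq_sum_range (by simp [partitionExpSum_zero])
    (mul_partitionExpSum _) (mul_inv_prod_eq_sum hq)) n

open Nat in
theorem neg_one_pow_div_prod_eq_expWeight (q : K) {n : ℕ} (P : n.Partition) :
    (-1 : K) ^ (n - Multiset.card P.parts) / ∏ i ∈ Icc 1 n,
        ((i : K) ^ (P.parts.count i) * ((P.parts.count i)! : K) * (q ^ i - 1) ^ (P.parts.count i))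
      = expWeight (torusCoeff q) P.parts := by
  have hsub : P.parts.toFinset ⊆ Icc 1 n := fun i hi => by
    have hi := Multiset.mem_toFinset.1 hi
    exact mem_Icc.2 ⟨P.parts_pos hi, P.le_of_mem_parts hi⟩
  rw [P.pow_sub_card_parts, prod_count_eq_of_toFinset_subset
      (fun (i m : ℕ) => (i : K) ^ m * (m ! : K) * (q ^ i - 1) ^ m) (by simp) hsub,
    ← prod_div_distrib, expWeight]
  refine prod_congr rfl fun i _ => ?_
  simp only [torusCoeff, div_pow, mul_pow, div_div]
  ring

end

theorem sum_tori_signed_general (q : ℕ) (hq : 2 ≤ q) (n : ℕ) :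
    ∑ P : Nat.Partition n,
        ((-1 : ℚ) ^ (n - Multiset.card P.parts)) *
          ((∏ i ∈ range n, ((q : ℚ) ^ n - (q : ℚ) ^ i)) /
            (∏ i ∈ Icc 1 n,
              ((i : ℚ) ^ (P.parts.count i) * (Nat.factorial (P.parts.count i) : ℚ) *
                ((q : ℚ) ^ i - 1) ^ (P.parts.count i))))
      = (q : ℚ) ^ (n * (n - 1) / 2) := by
  have hq' (j : ℕ) : (q : ℚ) ^ (j + 1) ≠ 1 :=
    (one_lt_pow₀ (by exact_mod_cast hq) j.succ_ne_zero).ne'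
  calc _ = (∏ i ∈ range n, ((q : ℚ) ^ n - (q : ℚ) ^ i)) *
          partitionExpSum (torusCoeff (q : ℚ)) n := by
        rw [partitionExpSum, mul_sum]
        refine sum_congr rfl fun P _ => ?_
        rw [← neg_one_pow_div_prod_eq_expWeight]
        ring
    _ = _ := by
        rw [partitionExpSum_torusCoeff hq', prod_range_pow_sub_pow_s15, mul_assoc, mul_inv_cancel₀
          (prod_ne_zero_iff.2 fun j _ => sub_ne_zero.2 (hq' j)), mul_one]

/-- The signed count of `F`-stable maximal tori of `GL_n(F̄_q)` by parity of the number
of irreducible factors: `∑_{λ ⊢ n} (-1)^(n - ℓ(λ)) |GL_n(q)| / w_q(λ) = q^(n(n-1)/2)`. -/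
theorem sum_tori_signed (q : ℕ) (hq : 2 ≤ q) (n : ℕ) (hn : 1 ≤ n) :
    ∑ P : Nat.Partition n,
        ((-1 : ℚ) ^ (n - Multiset.card P.parts)) *
          ((∏ i ∈ range n, ((q : ℚ) ^ n - (q : ℚ) ^ i)) /
            (∏ i ∈ Icc 1 n,
              ((i : ℚ) ^ (P.parts.count i) * (Nat.factorial (P.parts.count i) : ℚ) *
                ((q : ℚ) ^ i - 1) ^ (P.parts.count i))))
      = (q : ℚ) ^ (n * (n - 1) / 2) :=
  sum_tori_signed_general q hq n
end
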